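/- arXiv:2006.13793 — 2 statements merged into one kernel-verified Lean document; each statement's English description precedes it below -/
import Mathlib

section
/- Let 𝒫 be a finite partition of S¹ with |𝒫| ≥ 2 into path-connected parts such that the auxiliary quiver Q — with vertex set 𝒫 and an arrow P → P' whenever P ≠ P', P ∪ P' is path-connected, and there exist x ∈ P, y ∈ P' with y ⪯ x — is a quiver of type Ã_{|𝒫|−1}. If M is a Jordan cell representation of Q, then the push down of M — the representation U of Ã_ℝ with U(x) = M(P) for x ∈ P, U equal to the identity on generating morphisms between points of the same part, and equal to the composite of the maps of M along the corresponding arrows of Q otherwise — is a Jordan cell of Ã_ℝ. -/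
/-!
Lift the cycle of `M` to `ℤ`: the arrow maps and their inverses are isomorphisms
`M j ≃ M (j + 1)`, and their composites give a transport `M i ≃ M j` between any two integers,
functorial and `N`-periodic. Since every morphism of the continuous quiver factors through
points of all parts lying between its endpoints, each structure map of the push down is the
transport between the indices of the parts of its endpoints. So all structure maps are
isomorphisms, the dimension is that of `M`, and the monodromy of the push down is the transport
once around the cycle, which is conjugate to the monodromy of `M`; conjugation carries invariant
decompositions to invariant decompositions.
-/

open Set

noncomputable section

/-- A continuous quiver of type Ã: the data of the (even) set `S` of sinks/sources
on the circle, described via the cardinality `2*m`-ish data `m` and the angles `α`.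
When `m = 0` we are in the cyclic case and fix `α j = π j`. -/
structure AtR where
  m : ℕ
  α : ℤ → ℝ
  mono : StrictMono α
  cyc : m = 0 → ∀ j : ℤ, α j = Real.pi * j
  per : m ≠ 0 → ∀ j : ℤ, α (j + 2 * m) = α j + 2 * Real.pi
  base0 : 0 ≤ α 0
  base1 : α 0 < 2 * Real.pi

namespace AtR

variable (Q : AtR)

/-- `covRel θ φ` holds iff there is a morphism `e^{iθ} → e^{iφ}` in the continuous
quiver of type Ã, presented on the universal cover `ℝ` of the circle.
In the cyclic case (`m = 0`) morphisms go counterclockwise, i.e. `θ ≤ φ`;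
otherwise a morphism stays within one (lifted) arc `[α j, α (j+1)]` and goes
down on even arcs (towards the sink `α j`) and up on odd arcs. -/
def covRel (θ φ : ℝ) : Prop :=
  if Q.m = 0 then θ ≤ φ
  else ∃ j : ℤ, θ ∈ Set.Icc (Q.α j) (Q.α (j + 1)) ∧ φ ∈ Set.Icc (Q.α j) (Q.α (j + 1)) ∧
    ((Even j ∧ φ ≤ θ) ∨ (¬ Even j ∧ θ ≤ φ))

variable {Q}

lemma arcs_overlap {j j' : ℤ} {x : ℝ}
    (hj : x ∈ Set.Icc (Q.α j) (Q.α (j + 1))) (hj' : x ∈ Set.Icc (Q.α j') (Q.α (j' + 1)))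
    (hne : j ≠ j') :
    (j' = j + 1 ∧ x = Q.α (j + 1)) ∨ (j = j' + 1 ∧ x = Q.α j) := by
  rcases lt_or_gt_of_ne hne with h | h
  · left
    have h1 : j + 1 ≤ j' := by omega
    have h2 : Q.α (j + 1) ≤ Q.α j' := Q.mono.monotone h1
    have hx : x = Q.α (j + 1) := le_antisymm hj.2 (le_trans h2 hj'.1)
    have hx2 : Q.α (j + 1) = Q.α j' := le_antisymm h2 (hx ▸ hj'.1)
    exact ⟨(Q.mono.injective hx2).symm, hx⟩
  · right
    have h1 : j' + 1 ≤ j := by omega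
    have h2 : Q.α (j' + 1) ≤ Q.α j := Q.mono.monotone h1
    have hx : x = Q.α (j' + 1) := le_antisymm hj'.2 (le_trans h2 hj.1)
    have hx2 : Q.α (j' + 1) = Q.α j := le_antisymm h2 (hx ▸ hj.1)
    exact ⟨Q.mono.injective hx2.symm, hx.trans hx2⟩

/-- Key lemma: if there are morphisms `θ → φ` and `φ → ψ` then `φ` lies in the
convex hull of `{θ, ψ}`. -/
lemma covRel_hull {θ φ ψ : ℝ} (h1 : Q.covRel θ φ) (h2 : Q.covRel φ ψ) :
    min θ ψ ≤ φ ∧ φ ≤ max θ ψ := by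
  unfold covRel at h1 h2
  by_cases hm : Q.m = 0
  · rw [if_pos hm] at h1 h2
    exact ⟨le_trans (min_le_left _ _) h1, le_trans h2 (le_max_right _ _)⟩
  · rw [if_neg hm] at h1 h2
    obtain ⟨j, hθ, hφ, hp⟩ := h1
    obtain ⟨j2, hφ2, hψ, hp2⟩ := h2
    by_cases hjj : j = j2
    · subst hjj
      rcases hp with ⟨he, hle⟩ | ⟨ho, hle⟩ <;> rcases hp2 with ⟨he2, hle2⟩ | ⟨ho2, hle2⟩
      · exact ⟨le_trans (min_le_right _ _) hle2, le_trans hle (le_max_left _ _)⟩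
      · exact absurd he ho2
      · exact absurd he2 ho
      · exact ⟨le_trans (min_le_left _ _) hle, le_trans hle2 (le_max_right _ _)⟩
    · rcases arcs_overlap hφ hφ2 hjj with ⟨hj2, hφe⟩ | ⟨hj2, hφe⟩
      · -- j2 = j + 1, φ = α (j+1)
        rcases hp with ⟨he, hle⟩ | ⟨ho, hle⟩
        · -- Even j, φ ≤ θ and θ ≤ α (j+1) = φ so θ = φ
          have hθφ : θ = φ := le_antisymm (hφe ▸ hθ.2) hle
          rw [← hθφ]
          exact ⟨min_le_left _ _, le_max_left _ _⟩
        · -- Odd j so j2 = j+1 is even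
          have he2 : Even j2 := by
            rw [hj2]; rcases Int.even_or_odd j with h | h
            · exact absurd h ho
            · exact h.add_one
          rcases hp2 with ⟨_, hle2⟩ | ⟨ho2, _⟩
          · -- ψ ≤ φ, but φ = α j2 is the bottom of the arc of j2, so ψ = φ
            have hψφ : ψ = φ := by
              have : Q.α j2 ≤ ψ := hψ.1
              have hb : φ = Q.α j2 := by rw [hj2]; exact hφe
              linarith [hb ▸ this]
            rw [← hψφ]
            exact ⟨min_le_right _ _, le_max_right _ _⟩
          · exact absurd he2 ho2
      · -- j = j2 + 1, φ = α j
        rcases hp2 with ⟨he2, hle2⟩ | ⟨ho2, hle2⟩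
        · -- Even j2, ψ ≤ φ; φ = α j = α (j2+1) is the top of arc j2... and j odd
          have ho : ¬ Even j := by
            rw [hj2]; intro h
            exact (Int.even_add_one.mp h) he2
          rcases hp with ⟨he', _⟩ | ⟨_, hle⟩
          · exact absurd he' ho
          · -- θ ≤ φ, φ = α j is bottom of arc j, so θ = φ
            have hθφ : θ = φ := le_antisymm hle (hφe ▸ hθ.1)
            rw [← hθφ]
            exact ⟨min_le_left _ _, le_max_left _ _⟩
        · -- Odd j2, φ ≤ ψ; φ = α (j2+1) top of arc j2 so ψ = φ
          have hψφ : ψ = φ := by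
            have hup : ψ ≤ Q.α (j2 + 1) := hψ.2
            have hb : φ = Q.α (j2 + 1) := by rw [← hj2]; exact hφe
            linarith [hb ▸ hup]
          rw [← hψφ]
          exact ⟨min_le_right _ _, le_max_right _ _⟩

lemma covRel_up (j : ℤ) (h : Q.m = 0 ∨ ¬ Even j) : Q.covRel (Q.α j) (Q.α (j + 1)) := by
  unfold covRel
  split_ifs with hm
  · exact Q.mono.monotone (by omega)
  · rcases h with h0 | hodd
    · exact absurd h0 hm
    · exact ⟨j, ⟨le_rfl, Q.mono.monotone (by omega)⟩,
        ⟨Q.mono.monotone (by omega), le_rfl⟩,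
        Or.inr ⟨hodd, Q.mono.monotone (by omega)⟩⟩

lemma covRel_down (j : ℤ) (hm : Q.m ≠ 0) (he : Even j) :
    Q.covRel (Q.α (j + 1)) (Q.α j) := by
  unfold covRel
  rw [if_neg hm]
  exact ⟨j, ⟨Q.mono.monotone (by omega), le_rfl⟩, ⟨le_rfl, Q.mono.monotone (by omega)⟩,
    Or.inl ⟨he, Q.mono.monotone (by omega)⟩⟩

variable (Q)

/-- The number of arcs used to travel once around the circle. -/
def periodN : ℕ := if Q.m = 0 then 2 else 2 * Q.m

lemma periodN_pos : 0 < Q.periodN := by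
  unfold periodN; split_ifs <;> omega

lemma α_periodN : Q.α (Q.periodN : ℤ) = Q.α 0 + 2 * Real.pi := by
  unfold periodN
  split_ifs with hm
  · have h2 : ((2:ℕ):ℤ) = 2 := by norm_cast
    rw [h2, Q.cyc hm 2, Q.cyc hm 0]
    push_cast; ring
  · have := Q.per hm 0
    rw [zero_add] at this
    rw [← this]
    norm_cast

end AtR
/-- A representation (i.e. an `S¹` persistence module) of the continuous quiver of
type Ã, presented equivariantly on the universal cover: vector spaces `obj θ`,
linear maps along every morphism of the quiver (encoded by `covRel`), and a
periodicity isomorphism `per` identifying `obj (θ + 2π)` with `obj θ`,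
compatibly with the maps. -/
structure SRep (k : Type) [Field k] (Q : AtR) where
  obj : ℝ → Type
  [instAdd : ∀ θ, AddCommGroup (obj θ)]
  [instMod : ∀ θ, Module k (obj θ)]
  map : ∀ {θ φ : ℝ}, Q.covRel θ φ → (obj θ →ₗ[k] obj φ)
  map_id : ∀ (θ : ℝ) (h : Q.covRel θ θ), map h = LinearMap.id
  map_comp : ∀ {θ φ ψ : ℝ} (h1 : Q.covRel θ φ) (h2 : Q.covRel φ ψ) (h3 : Q.covRel θ ψ),
      map h3 = (map h2).comp (map h1)
  per : ∀ θ : ℝ, obj (θ + 2 * Real.pi) ≃ₗ[k] obj θ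
  per_map : ∀ {θ φ : ℝ} (h : Q.covRel θ φ) (h' : Q.covRel (θ + 2 * Real.pi) (φ + 2 * Real.pi)),
      (map h).comp (per θ).toLinearMap = ((per φ).toLinearMap).comp (map h')

attribute [instance] SRep.instAdd SRep.instMod

namespace SRep

variable {k : Type} [Field k] {Q : AtR}

lemma per_map_apply (V : SRep k Q) {θ φ : ℝ} (h : Q.covRel θ φ)
    (h' : Q.covRel (θ + 2 * Real.pi) (φ + 2 * Real.pi)) (x : V.obj (θ + 2 * Real.pi)) :
    V.map h (V.per θ x) = V.per φ (V.map h' x) :=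
  LinearMap.congr_fun (V.per_map h h') x

/-- Transport along an equality of points of the cover. -/
def castO (V : SRep k Q) {a b : ℝ} (h : a = b) : V.obj a ≃ₗ[k] V.obj b :=
  h ▸ LinearEquiv.refl k (V.obj a)

/-- A family of linear maps is a morphism of representations if it is natural with
respect to all the structure maps and the periodicity isomorphisms. -/
def IsHomFam (V W : SRep k Q) (f : ∀ θ, V.obj θ →ₗ[k] W.obj θ) : Prop :=
  (∀ {θ φ : ℝ} (h : Q.covRel θ φ) (v : V.obj θ), f φ (V.map h v) = W.map h (f θ v)) ∧
  (∀ (θ : ℝ) (v : V.obj (θ + 2 * Real.pi)), f θ (V.per θ v) = W.per θ (f (θ + 2 * Real.pi) v))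

/-- Two representations are isomorphic if there is a family of linear isomorphisms
natural with respect to the structure maps and the periodicity isomorphisms. -/
def RepIso (V W : SRep k Q) : Prop :=
  ∃ e : ∀ θ, V.obj θ ≃ₗ[k] W.obj θ,
    (∀ {θ φ : ℝ} (h : Q.covRel θ φ) (v : V.obj θ), e φ (V.map h v) = W.map h (e θ v)) ∧
    (∀ (θ : ℝ) (v : V.obj (θ + 2 * Real.pi)), e θ (V.per θ v) = W.per θ (e (θ + 2 * Real.pi) v))

/-- `U` is a (direct) summand of `V`. -/
def SummandOf (U V : SRep k Q) : Prop :=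
  ∃ (f : ∀ θ, U.obj θ →ₗ[k] V.obj θ) (g : ∀ θ, V.obj θ →ₗ[k] U.obj θ),
    IsHomFam U V f ∧ IsHomFam V U g ∧ ∀ (θ : ℝ) (u : U.obj θ), g θ (f θ u) = u

/-- A representation is nonzero if some of its spaces is nonzero. -/
def Nonzero (V : SRep k Q) : Prop := ∃ (θ : ℝ) (v : V.obj θ), v ≠ 0

/-- Pointwise finite-dimensional. -/
def Pwf (V : SRep k Q) : Prop := ∀ θ, FiniteDimensional k (V.obj θ)

/-- Binary direct sum of representations. -/
def prod (V W : SRep k Q) : SRep k Q where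
  obj θ := V.obj θ × W.obj θ
  map h := (V.map h).prodMap (W.map h)
  map_id θ h := by
    rw [V.map_id θ h, W.map_id θ h]; exact LinearMap.prodMap_id
  map_comp h1 h2 h3 := by
    rw [V.map_comp h1 h2 h3, W.map_comp h1 h2 h3]
    exact (LinearMap.prodMap_comp _ _ _ _).symm
  per θ := (V.per θ).prodCongr (W.per θ)
  per_map h h' := by
    apply LinearMap.ext
    rintro ⟨a, b⟩
    simp only [LinearMap.comp_apply, LinearEquiv.coe_coe, LinearMap.prodMap_apply,
      LinearEquiv.prodCongr_apply]
    exact Prod.ext (V.per_map_apply h h' a) (W.per_map_apply h h' b)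

/-- Arbitrary direct sums of representations. -/
def dsum {B : Type} (A : B → SRep k Q) : SRep k Q where
  obj θ := Π₀ b, (A b).obj θ
  map h := DFinsupp.mapRange.linearMap fun b => (A b).map h
  map_id θ h := by
    have : (fun b => (A b).map h) = fun b => (LinearMap.id : (A b).obj θ →ₗ[k] _) := by
      funext b; exact (A b).map_id θ h
    rw [this]; exact DFinsupp.mapRange.linearMap_id
  map_comp h1 h2 h3 := by
    have : (fun b => (A b).map h3) = fun b => ((A b).map h2).comp ((A b).map h1) := by
      funext b; exact (A b).map_comp h1 h2 h3
    rw [this]; exact DFinsupp.mapRange.linearMap_comp _ _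
  per θ := DFinsupp.mapRange.linearEquiv fun b => (A b).per θ
  per_map h h' := by
    apply LinearMap.ext
    intro x
    ext b
    simp only [LinearMap.comp_apply, LinearEquiv.coe_coe,
      DFinsupp.mapRange.linearEquiv_apply, DFinsupp.mapRange.linearMap_apply,
      DFinsupp.mapRange_apply]
    exact (A b).per_map_apply h h' (x b)

/-- Indecomposability. -/
def Indecomposable (V : SRep k Q) : Prop :=
  V.Nonzero ∧ ∀ A B : SRep k Q, A.Nonzero → B.Nonzero → ¬ RepIso V (A.prod B)

end SRep
/-! ## Bars -/

/-- The basis of the bar `M_I` at the point `e^{iθ}`: the set `ξ⁻¹(e^{iθ}) ∩ I`. -/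
def barIdx (I : Set ℝ) (θ : ℝ) : Type :=
  {β : ℝ // β ∈ I ∧ ∃ n : ℤ, β = θ + 2 * Real.pi * n}

/-- The canonical identification of the bars' bases over `θ + 2π` and `θ`. -/
def barShift (I : Set ℝ) (θ : ℝ) : barIdx I (θ + 2 * Real.pi) ≃ barIdx I θ where
  toFun b := ⟨b.1, b.2.1, by
    obtain ⟨n, hn⟩ := b.2.2
    exact ⟨n + 1, by push_cast; linarith⟩⟩
  invFun b := ⟨b.1, b.2.1, by
    obtain ⟨n, hn⟩ := b.2.2
    exact ⟨n - 1, by push_cast; linarith⟩⟩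
  left_inv b := by apply Subtype.ext; rfl
  right_inv b := by apply Subtype.ext; rfl

variable (k : Type) [Field k]

/-- The structure map of the bar `M_I` along a morphism `θ → φ`:
a basis vector `b_β` is sent to `b_{β - θ + φ}` when `β - θ + φ ∈ I` and to `0`
otherwise. -/
def barMapHom (I : Set ℝ) (θ φ : ℝ) :
    (barIdx I θ →₀ k) →ₗ[k] (barIdx I φ →₀ k) := by
  classical
  exact Finsupp.linearCombination k (fun β : barIdx I θ =>
    if h : β.1 - θ + φ ∈ I then
      Finsupp.single (⟨β.1 - θ + φ, h, by
        obtain ⟨n, hn⟩ := β.2.2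
        exact ⟨n, by rw [hn]; ring⟩⟩ : barIdx I φ) (1 : k)
    else 0)

variable {k}

namespace SRep

variable {Q : AtR}

/-- `V` is (isomorphic to) the bar `M_I` on the bounded interval `I ⊂ ℝ`. -/
def BarOn (I : Set ℝ) (V : SRep k Q) : Prop :=
  I.Nonempty ∧ Bornology.IsBounded I ∧ I.OrdConnected ∧
  ∃ e : ∀ θ, V.obj θ ≃ₗ[k] (barIdx I θ →₀ k),
    (∀ {θ φ : ℝ} (h : Q.covRel θ φ) (v : V.obj θ),
        e φ (V.map h v) = barMapHom k I θ φ (e θ v)) ∧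
    (∀ (θ : ℝ) (v : V.obj (θ + 2 * Real.pi)),
        e θ (V.per θ v) = Finsupp.equivMapDomain (barShift I θ) (e (θ + 2 * Real.pi) v))

/-- `V` is a bar. -/
def IsBar (V : SRep k Q) : Prop := ∃ I : Set ℝ, BarOn I V

end SRep
/-! ## Jordan cells -/

namespace SRep

variable {k : Type} [Field k] {Q : AtR}

/-- One step of the monodromy: the isomorphism `V(α j) ≃ V(α (j+1))` obtained
from the structure map along the arc (or its inverse, depending on the
orientation of the arc). -/
def step (V : SRep k Q)
    (hiso : ∀ ⦃θ φ : ℝ⦄ (h : Q.covRel θ φ), Function.Bijective (V.map h)) (j : ℤ) :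
    V.obj (Q.α j) ≃ₗ[k] V.obj (Q.α (j + 1)) :=
  if h : Q.m = 0 ∨ ¬ Even j then
    LinearEquiv.ofBijective _ (hiso (AtR.covRel_up j h))
  else
    (LinearEquiv.ofBijective _ (hiso (AtR.covRel_down j
      (by push_neg at h; exact h.1) (by push_neg at h; exact h.2)))).symm

/-- The zig-zag isomorphism from `V(α 0)` to `V(α n)`. -/
def zig (V : SRep k Q)
    (hiso : ∀ ⦃θ φ : ℝ⦄ (h : Q.covRel θ φ), Function.Bijective (V.map h)) :
    (n : ℕ) → (V.obj (Q.α 0) ≃ₗ[k] V.obj (Q.α (n : ℤ)))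
  | 0 => V.castO (congrArg Q.α (by norm_num))
  | (n + 1) => ((V.zig hiso n).trans (V.step hiso (n : ℤ))).trans
      (V.castO (congrArg Q.α (by push_cast; ring)))

/-- The monodromy automorphism `V̂` of `V(α 0)`: travel once counterclockwise
around the circle (via `zig`) and come back via the periodicity isomorphism. -/
def monodromy (V : SRep k Q)
    (hiso : ∀ ⦃θ φ : ℝ⦄ (h : Q.covRel θ φ), Function.Bijective (V.map h)) :
    V.obj (Q.α 0) ≃ₗ[k] V.obj (Q.α 0) :=
  ((V.zig hiso Q.periodN).trans (V.castO Q.α_periodN)).trans (V.per (Q.α 0))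

/-- `V` is a Jordan cell: its spaces have a constant finite dimension `d ≥ 1`,
all its structure maps are isomorphisms, and `V(α 0)` admits no direct sum
decomposition into two nonzero subspaces invariant under the monodromy. -/
structure IsJordanCell (V : SRep k Q) : Prop where
  bij : ∀ ⦃θ φ : ℝ⦄ (h : Q.covRel θ φ), Function.Bijective (V.map h)
  dim : ∃ d : ℕ, 1 ≤ d ∧ ∀ θ, Module.finrank k (V.obj θ) = d
  indec : ∀ U W : Submodule k (V.obj (Q.α 0)), IsCompl U W →
      (∀ u ∈ U, V.monodromy bij u ∈ U) → (∀ w ∈ W, V.monodromy bij w ∈ W) →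
      U = ⊥ ∨ W = ⊥

end SRep
/-! ## Restriction -/

/-- The periodization of a subset of `ℝ`: the full preimage under `ξ` of its image
in the circle. -/
def periodize (s : Set ℝ) : Set ℝ := {θ | ∃ n : ℤ, θ + 2 * Real.pi * n ∈ s}

lemma periodize_shift (s : Set ℝ) (θ : ℝ) :
    θ ∈ periodize s ↔ θ + 2 * Real.pi ∈ periodize s := by
  constructor
  · rintro ⟨n, hn⟩
    refine ⟨n - 1, ?_⟩
    push_cast
    rw [show θ + 2 * Real.pi + 2 * Real.pi * ((n : ℝ) - 1) = θ + 2 * Real.pi * (n : ℝ) from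
      by ring]
    exact hn
  · rintro ⟨n, hn⟩
    refine ⟨n + 1, ?_⟩
    push_cast
    rw [show θ + 2 * Real.pi * ((n : ℝ) + 1) = θ + 2 * Real.pi + 2 * Real.pi * (n : ℝ) from
      by ring]
    exact hn

namespace SRep

open Classical

variable {k : Type} [Field k] {Q : AtR}

/-- The restriction `V|_A` of a representation to a (2π-periodic) subset `A ⊂ ℝ`
corresponding to a subset of the circle.  Its space at `θ ∈ A` is `V(θ)` and `0`
elsewhere; its structure map along a morphism `θ → φ` is `V(θ,φ)` when every
point through which the morphism factors lies in `A` (the set of such points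
being the interval `[min θ φ, max θ φ]`), and `0` otherwise. -/
def restrict (V : SRep k Q) (A : Set ℝ) (hA : ∀ θ, θ ∈ A ↔ θ + 2 * Real.pi ∈ A) :
    SRep k Q where
  obj θ := PLift (θ ∈ A) → V.obj θ
  map {θ φ} h :=
    { toFun := fun F _ =>
        if c : Set.Icc (min θ φ) (max θ φ) ⊆ A then
          V.map h (F ⟨c ⟨min_le_left θ φ, le_max_left θ φ⟩⟩) else 0
      map_add' := by
        intro F G; funext hφ
        by_cases c : Set.Icc (min θ φ) (max θ φ) ⊆ A <;> simp [c]
      map_smul' := by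
        intro a F; funext hφ
        by_cases c : Set.Icc (min θ φ) (max θ φ) ⊆ A <;> simp [c] }
  map_id θ h := by
    apply LinearMap.ext; intro F; funext hφ
    have c : Set.Icc (min θ θ) (max θ θ) ⊆ A := by
      rw [min_self, max_self, Set.Icc_self]
      exact Set.singleton_subset_iff.mpr hφ.down
    simp only [LinearMap.coe_mk, AddHom.coe_mk, LinearMap.id_coe, id_eq]
    rw [dif_pos c, V.map_id θ h]
    rfl
  map_comp {θ φ ψ} h1 h2 h3 := by
    apply LinearMap.ext; intro F; funext hψ
    have hkey := AtR.covRel_hull h1 h2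
    have s1 : Set.Icc (min θ φ) (max θ φ) ⊆ Set.Icc (min θ ψ) (max θ ψ) :=
      Set.Icc_subset_Icc (le_min (min_le_left θ ψ) hkey.1) (max_le (le_max_left θ ψ) hkey.2)
    have s2 : Set.Icc (min φ ψ) (max φ ψ) ⊆ Set.Icc (min θ ψ) (max θ ψ) :=
      Set.Icc_subset_Icc (le_min hkey.1 (min_le_right θ ψ)) (max_le hkey.2 (le_max_right θ ψ))
    by_cases c1 : Set.Icc (min θ φ) (max θ φ) ⊆ A
    · by_cases c2 : Set.Icc (min φ ψ) (max φ ψ) ⊆ A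
      · have c3 : Set.Icc (min θ ψ) (max θ ψ) ⊆ A := by
          intro z hz
          rcases le_total θ ψ with hθψ | hθψ
          · rw [min_eq_left hθψ, max_eq_right hθψ] at hz
            rcases le_total z φ with hzφ | hzφ
            · exact c1 ⟨le_trans (min_le_left θ φ) hz.1, le_trans hzφ (le_max_right θ φ)⟩
            · exact c2 ⟨le_trans (min_le_left φ ψ) hzφ, le_trans hz.2 (le_max_right φ ψ)⟩
          · rw [min_eq_right hθψ, max_eq_left hθψ] at hz
            rcases le_total z φ with hzφ | hzφ
            · exact c2 ⟨le_trans (min_le_right φ ψ) hz.1, le_trans hzφ (le_max_left φ ψ)⟩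
            · exact c1 ⟨le_trans (min_le_right θ φ) hzφ, le_trans hz.2 (le_max_left θ φ)⟩
        simp only [LinearMap.coe_mk, AddHom.coe_mk, LinearMap.comp_apply]
        rw [dif_pos c3, dif_pos c2, dif_pos c1, V.map_comp h1 h2 h3]
        rfl
      · have c3 : ¬ Set.Icc (min θ ψ) (max θ ψ) ⊆ A := fun c3 => c2 fun z hz => c3 (s2 hz)
        simp only [LinearMap.coe_mk, AddHom.coe_mk, LinearMap.comp_apply]
        rw [dif_neg c3, dif_neg c2]
    · have c3 : ¬ Set.Icc (min θ ψ) (max θ ψ) ⊆ A := fun c3 => c1 fun z hz => c3 (s1 hz)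
      simp only [LinearMap.coe_mk, AddHom.coe_mk, LinearMap.comp_apply]
      rw [dif_neg c3]
      by_cases c2 : Set.Icc (min φ ψ) (max φ ψ) ⊆ A
      · rw [dif_pos c2, dif_neg c1, map_zero]
      · rw [dif_neg c2]
  per θ :=
    { toFun := fun F hθ => V.per θ (F ⟨(hA θ).mp hθ.down⟩)
      map_add' := by intro F G; funext hθ; simp
      map_smul' := by intro a F; funext hθ; simp
      invFun := fun G h2 => (V.per θ).symm (G ⟨(hA θ).mpr h2.down⟩)
      left_inv := by intro F; funext h2; simp
      right_inv := by intro G; funext hθ; simp }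
  per_map {θ φ} h h' := by
    apply LinearMap.ext; intro F; funext hφ
    have e1 : min (θ + 2 * Real.pi) (φ + 2 * Real.pi) = min θ φ + 2 * Real.pi :=
      min_add_add_right θ φ _
    have e2 : max (θ + 2 * Real.pi) (φ + 2 * Real.pi) = max θ φ + 2 * Real.pi :=
      max_add_add_right θ φ _
    have hcc : (Set.Icc (min (θ + 2 * Real.pi) (φ + 2 * Real.pi))
        (max (θ + 2 * Real.pi) (φ + 2 * Real.pi)) ⊆ A) ↔
        (Set.Icc (min θ φ) (max θ φ) ⊆ A) := by
      rw [e1, e2]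
      constructor
      · intro c z hz
        rw [hA z]
        exact c ⟨by linarith [hz.1], by linarith [hz.2]⟩
      · intro c z hz
        have h2 : z - 2 * Real.pi ∈ Set.Icc (min θ φ) (max θ φ) :=
          ⟨by linarith [hz.1], by linarith [hz.2]⟩
        have h3 := (hA (z - 2 * Real.pi)).mp (c h2)
        simpa using h3
    simp only [LinearMap.coe_mk, AddHom.coe_mk, LinearMap.comp_apply, LinearEquiv.coe_coe,
      LinearEquiv.coe_mk]
    by_cases c : Set.Icc (min θ φ) (max θ φ) ⊆ A
    · rw [dif_pos c, dif_pos (hcc.mpr c)]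
      exact V.per_map_apply h h' _
    · rw [dif_neg c, dif_neg (fun cc => c (hcc.mp cc)), map_zero]

/-- `V` is finitistic: it is pointwise finite-dimensional and for each arc
`R̄_n = [α n, α (n+1)]`, every bar in the bar code decomposition of the
restriction `V|_{R̄_n}` has support touching an endpoint of the arc. -/
def Finitistic (V : SRep k Q) : Prop :=
  Pwf V ∧ ∀ n : ℤ, ∃ (B : Type) (Wb : B → SRep k Q) (I : B → Set ℝ),
    (∀ b, BarOn (I b) (Wb b) ∧ I b ⊆ Set.Icc (Q.α n) (Q.α (n + 1)) ∧
      (Q.α n ∈ I b ∨ Q.α (n + 1) ∈ I b)) ∧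
    RepIso (V.restrict (periodize (Set.Icc (Q.α n) (Q.α (n + 1))))
      (periodize_shift _)) (dsum Wb)

end SRep
/-! ## Representations of (finite) quivers of type Ã_n

An `Ã_n` quiver has `N = n + 1` vertices, indexed by `ZMod N`, arranged
counterclockwise in a cycle, with exactly one arrow between the vertices `i` and
`i + 1` for each `i : ZMod N`; the orientation function `o` records its direction
(`o i = true` iff the arrow goes `i → i + 1`). -/

/-- A representation of the `Ã_{N-1}` quiver with orientation `o`. -/
structure CycRep (k : Type) [Field k] (N : ℕ) (o : ZMod N → Bool) where
  M : ZMod N → Type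
  [instAdd : ∀ i, AddCommGroup (M i)]
  [instMod : ∀ i, Module k (M i)]
  up : ∀ i : ZMod N, o i = true → (M i →ₗ[k] M (i + 1))
  down : ∀ i : ZMod N, o i = false → (M (i + 1) →ₗ[k] M i)

attribute [instance] CycRep.instAdd CycRep.instMod

namespace CycRep

variable {k : Type} [Field k] {N : ℕ} {o : ZMod N → Bool}

/-- Transport along an equality of vertices. -/
def castM (A : CycRep k N o) {i i' : ZMod N} (h : i = i') : A.M i ≃ₗ[k] A.M i' :=
  h ▸ LinearEquiv.refl k (A.M i)

/-- Isomorphism of representations of the `Ã_{N-1}` quiver. -/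
def Iso (A B : CycRep k N o) : Prop :=
  ∃ e : ∀ i, A.M i ≃ₗ[k] B.M i,
    (∀ (i : ZMod N) (h : o i = true) (v : A.M i),
        e (i + 1) (A.up i h v) = B.up i h (e i v)) ∧
    (∀ (i : ZMod N) (h : o i = false) (v : A.M (i + 1)),
        e i (A.down i h v) = B.down i h (e (i + 1) v))

def Nonzero (A : CycRep k N o) : Prop := ∃ (i : ZMod N) (v : A.M i), v ≠ 0

/-- Binary direct sum. -/
def prod (A B : CycRep k N o) : CycRep k N o where
  M i := A.M i × B.M i
  up i h := (A.up i h).prodMap (B.up i h)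
  down i h := (A.down i h).prodMap (B.down i h)

/-- Arbitrary direct sum. -/
def dsum {B : Type} (A : B → CycRep k N o) : CycRep k N o where
  M i := Π₀ b, (A b).M i
  up i h := DFinsupp.mapRange.linearMap fun b => (A b).up i h
  down i h := DFinsupp.mapRange.linearMap fun b => (A b).down i h

def Indecomposable (A : CycRep k N o) : Prop :=
  A.Nonzero ∧ ∀ B C : CycRep k N o, B.Nonzero → C.Nonzero → ¬ Iso A (B.prod C)

end CycRep

/-- The basis of the bar on the interval `{a, ..., b} ⊂ ℤ` at the vertex `i`:
integers in the interval congruent to `i` mod `N`. -/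
def cycIdx (N : ℕ) (a b : ℤ) (i : ZMod N) : Type :=
  {m : ℤ // m ∈ Set.Icc a b ∧ ((m : ZMod N) = i)}

variable (k : Type) [Field k]

open Classical in
/-- The bar's map along an arrow `i → i + 1` : `b_m ↦ b_{m+1}` when `m+1` stays in
the interval, and `0` otherwise. -/
def cycBarUp (N : ℕ) (a b : ℤ) (i : ZMod N) :
    (cycIdx N a b i →₀ k) →ₗ[k] (cycIdx N a b (i + 1) →₀ k) :=
  Finsupp.linearCombination k (fun m : cycIdx N a b i =>
    if hm : m.1 + 1 ∈ Set.Icc a b then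
      Finsupp.single (⟨m.1 + 1, hm, by push_cast; rw [m.2.2]⟩ : cycIdx N a b (i + 1)) (1 : k)
    else 0)

open Classical in
/-- The bar's map along an arrow `i + 1 → i` : `b_m ↦ b_{m-1}` when `m-1` stays in
the interval, and `0` otherwise. -/
def cycBarDown (N : ℕ) (a b : ℤ) (i : ZMod N) :
    (cycIdx N a b (i + 1) →₀ k) →ₗ[k] (cycIdx N a b i →₀ k) :=
  Finsupp.linearCombination k (fun m : cycIdx N a b (i + 1) =>
    if hm : m.1 - 1 ∈ Set.Icc a b then
      Finsupp.single (⟨m.1 - 1, hm, by push_cast; rw [m.2.2]; ring⟩ : cycIdx N a b i) (1 : k)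
    else 0)

variable {k}

namespace CycRep

variable {k : Type} [Field k] {N : ℕ} {o : ZMod N → Bool}

/-- `A` is (isomorphic to) the bar on the interval `{a, ..., b}` of `ℤ`. -/
def BarOn (a b : ℤ) (A : CycRep k N o) : Prop :=
  a ≤ b ∧ ∃ e : ∀ i, A.M i ≃ₗ[k] (cycIdx N a b i →₀ k),
    (∀ (i : ZMod N) (h : o i = true) (v : A.M i),
        e (i + 1) (A.up i h v) = cycBarUp k N a b i (e i v)) ∧
    (∀ (i : ZMod N) (h : o i = false) (v : A.M (i + 1)),
        e i (A.down i h v) = cycBarDown k N a b i (e (i + 1) v))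

def IsBar (A : CycRep k N o) : Prop := ∃ a b : ℤ, BarOn a b A

/-- One step `M i ≃ M (i+1)` of the monodromy of a representation all of whose
arrow maps are isomorphisms. -/
def stepC (A : CycRep k N o)
    (hup : ∀ (i : ZMod N) (h : o i = true), Function.Bijective (A.up i h))
    (hdown : ∀ (i : ZMod N) (h : o i = false), Function.Bijective (A.down i h))
    (i : ZMod N) : A.M i ≃ₗ[k] A.M (i + 1) :=
  if h : o i = true then LinearEquiv.ofBijective _ (hup i h)
  else (LinearEquiv.ofBijective _ (hdown i (by revert h; cases o i <;> simp))).symm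

def zigC (A : CycRep k N o)
    (hup : ∀ (i : ZMod N) (h : o i = true), Function.Bijective (A.up i h))
    (hdown : ∀ (i : ZMod N) (h : o i = false), Function.Bijective (A.down i h)) :
    (n : ℕ) → (A.M 0 ≃ₗ[k] A.M (n : ZMod N))
  | 0 => A.castM (by norm_num)
  | (n + 1) => ((A.zigC hup hdown n).trans (A.stepC hup hdown (n : ZMod N))).trans
      (A.castM (by push_cast; ring))

/-- The monodromy `M̂ : M 0 ≃ M 0` obtained by composing the arrow maps and their
inverses once around the cycle. -/
def monodromyC (A : CycRep k N o)
    (hup : ∀ (i : ZMod N) (h : o i = true), Function.Bijective (A.up i h))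
    (hdown : ∀ (i : ZMod N) (h : o i = false), Function.Bijective (A.down i h)) :
    A.M 0 ≃ₗ[k] A.M 0 :=
  (A.zigC hup hdown N).trans (A.castM (by simp))

/-- `A` is a Jordan cell representation of the `Ã_{N-1}` quiver. -/
structure IsJordan (A : CycRep k N o) : Prop where
  bijUp : ∀ (i : ZMod N) (h : o i = true), Function.Bijective (A.up i h)
  bijDown : ∀ (i : ZMod N) (h : o i = false), Function.Bijective (A.down i h)
  dim : ∃ d : ℕ, 1 ≤ d ∧ ∀ i, Module.finrank k (A.M i) = d
  indec : ∀ U W : Submodule k (A.M 0), IsCompl U W →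
      (∀ u ∈ U, A.monodromyC bijUp bijDown u ∈ U) →
      (∀ w ∈ W, A.monodromyC bijUp bijDown w ∈ W) → U = ⊥ ∨ W = ⊥

end CycRep
/-! ## Partitions of the circle and push downs -/

/-- A finite partition of the circle into (at least two) path-connected parts,
presented on the universal cover: `2π`-periodically ordered intervals `J j`
(`j : ℤ`), with `J (j + N)` the translate of `J j`; the parts of the circle are
the images of the `J j`, and `j` reduces mod `N` to the index of the part. -/
structure CircPartition (Q : AtR) where
  N : ℕ
  hN : 2 ≤ N
  J : ℤ → Set ℝ
  nonempty : ∀ j, (J j).Nonempty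
  ordconn : ∀ j, (J j).OrdConnected
  ordered : ∀ {j j' : ℤ}, j < j' → ∀ x ∈ J j, ∀ y ∈ J j', x < y
  cover : ∀ θ : ℝ, ∃ j, θ ∈ J j
  jper : ∀ (j : ℤ) (θ : ℝ), θ ∈ J j ↔ θ + 2 * Real.pi ∈ J (j + N)

namespace CircPartition

variable {Q : AtR} (C : CircPartition Q)

/-- The index of the part containing `θ`. -/
def partIdx (θ : ℝ) : ℤ := Classical.choose (C.cover θ)

lemma mem_partIdx (θ : ℝ) : θ ∈ C.J (C.partIdx θ) := Classical.choose_spec (C.cover θ)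

lemma partIdx_eq {θ : ℝ} {j : ℤ} (h : θ ∈ C.J j) : C.partIdx θ = j := by
  by_contra hne
  rcases lt_or_gt_of_ne hne with hlt | hlt
  · exact lt_irrefl θ (C.ordered hlt _ (C.mem_partIdx θ) _ h)
  · exact lt_irrefl θ (C.ordered hlt _ h _ (C.mem_partIdx θ))

lemma partIdx_shift (θ : ℝ) : C.partIdx (θ + 2 * Real.pi) = C.partIdx θ + C.N :=
  C.partIdx_eq ((C.jper _ _).mp (C.mem_partIdx θ))

/-- The index of the part containing `θ`, as a vertex of the auxiliary quiver. -/
def partZ (θ : ℝ) : ZMod C.N := ((C.partIdx θ : ℤ) : ZMod C.N)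

lemma partZ_shift (θ : ℝ) : C.partZ (θ + 2 * Real.pi) = C.partZ θ := by
  unfold partZ
  rw [C.partIdx_shift θ]
  push_cast
  simp

lemma partZ_congr {θ φ : ℝ} (hp : C.partIdx θ = C.partIdx φ) : C.partZ θ = C.partZ φ := by
  unfold partZ; rw [hp]

lemma partZ_succ {θ φ : ℝ} (hp : C.partIdx φ = C.partIdx θ + 1) :
    C.partZ θ + 1 = C.partZ φ := by
  unfold partZ; rw [hp]; push_cast; ring

lemma partZ_pred {θ φ : ℝ} (hp : C.partIdx θ = C.partIdx φ + 1) :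
    C.partZ θ = C.partZ φ + 1 := by
  unfold partZ; rw [hp]; push_cast; ring

/-- There is an arrow from the part of `J j` to the part of `J (j+1)` in the
auxiliary quiver (their union being automatically path-connected). -/
def dirUp (j : ℤ) : Prop := ∃ x ∈ C.J j, ∃ y ∈ C.J (j + 1), Q.covRel x y

/-- There is an arrow from the part of `J (j+1)` to the part of `J j`. -/
def dirDown (j : ℤ) : Prop := ∃ x ∈ C.J (j + 1), ∃ y ∈ C.J j, Q.covRel x y

end CircPartition

namespace SRep

variable {k : Type} [Field k] {Q : AtR}

/-- `U` is the push down to the continuous quiver of the representation `A` of the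
auxiliary `Ã_{N-1}` quiver of the partition `C` (with orientation `o`):
`U` is constant equal to `A.M i` on the `i`-th part, with identity maps within a
part, the maps of `A` across boundaries of parts, and the evident periodicity. -/
def PushdownOf (C : CircPartition Q) (o : ZMod C.N → Bool) (A : CycRep k C.N o)
    (U : SRep k Q) : Prop :=
  ∃ e : ∀ θ, U.obj θ ≃ₗ[k] A.M (C.partZ θ),
    (∀ {θ φ : ℝ} (h : Q.covRel θ φ) (hp : C.partIdx θ = C.partIdx φ) (v : U.obj θ),
        e φ (U.map h v) = A.castM (C.partZ_congr hp) (e θ v)) ∧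
    (∀ {θ φ : ℝ} (h : Q.covRel θ φ) (hp : C.partIdx φ = C.partIdx θ + 1)
        (ht : o (C.partZ θ) = true) (v : U.obj θ),
        e φ (U.map h v) = A.castM (C.partZ_succ hp) (A.up (C.partZ θ) ht (e θ v))) ∧
    (∀ {θ φ : ℝ} (h : Q.covRel θ φ) (hp : C.partIdx θ = C.partIdx φ + 1)
        (hf : o (C.partZ φ) = false) (v : U.obj θ),
        e φ (U.map h v) = A.down (C.partZ φ) hf (A.castM (C.partZ_pred hp) (e θ v))) ∧
    (∀ (θ : ℝ) (v : U.obj (θ + 2 * Real.pi)),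
        e θ (U.per θ v) = A.castM (C.partZ_shift θ) (e (θ + 2 * Real.pi) v))

/-- Transport between the values of `V` at representative points whose indices
agree modulo the period, using the periodicity isomorphism if needed. -/
def ptBridge (V : SRep k Q) (pt : ℤ → ℝ) (Nn : ℕ)
    (hper : ∀ j : ℤ, pt (j + (Nn : ℤ)) = pt j + 2 * Real.pi) {a b : ℤ}
    (h : a = b ∨ a = b + (Nn : ℤ)) : V.obj (pt a) ≃ₗ[k] V.obj (pt b) :=
  if he : a = b then V.castO (congrArg pt he)
  else (V.castO (show pt a = pt b + 2 * Real.pi by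
      rw [h.resolve_left he]; exact hper b)).trans (V.per (pt b))

lemma zmod_val_succ {N : ℕ} (hN : 2 ≤ N) (i : ZMod N) :
    (((i + 1 : ZMod N).val : ℤ) = (i.val : ℤ) + 1) ∨
      ((i.val : ℤ) + 1 = ((i + 1 : ZMod N).val : ℤ) + (N : ℤ)) := by
  haveI : NeZero N := ⟨by omega⟩
  haveI : Fact (1 < N) := ⟨by omega⟩
  have hval : (i + 1 : ZMod N).val = (i.val + 1) % N := by
    rw [ZMod.val_add, ZMod.val_one]
  have hlt : i.val < N := ZMod.val_lt i
  rcases Nat.lt_or_ge (i.val + 1) N with h | h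
  · left; rw [hval, Nat.mod_eq_of_lt h]; push_cast; ring
  · right
    have he : i.val + 1 = N := by omega
    rw [hval, he, Nat.mod_self]
    push_cast
    omega

/-- The auxiliary representation `M_V` of the auxiliary quiver of a partition `C`,
given by the values of `V` at the representative points `pt`. -/
def auxOfPoints (V : SRep k Q) (C : CircPartition Q) (o : ZMod C.N → Bool) (pt : ℤ → ℝ)
    (hper : ∀ j : ℤ, pt (j + (C.N : ℤ)) = pt j + 2 * Real.pi)
    (hup : ∀ (i : ZMod C.N), o i = true → Q.covRel (pt (i.val : ℤ)) (pt ((i.val : ℤ) + 1)))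
    (hdown : ∀ (i : ZMod C.N), o i = false → Q.covRel (pt ((i.val : ℤ) + 1)) (pt (i.val : ℤ))) :
    CycRep k C.N o where
  M i := V.obj (pt (i.val : ℤ))
  up i h := (V.ptBridge pt C.N hper
      ((zmod_val_succ C.hN i).imp Eq.symm id)).toLinearMap ∘ₗ V.map (hup i h)
  down i h := V.map (hdown i h) ∘ₗ (V.ptBridge pt C.N hper
      ((zmod_val_succ C.hN i).imp Eq.symm id)).symm.toLinearMap

/-- `U` is the refinement of `V` with respect to the partition `C` and the choice
of representative points `pt`: `U(θ) = V(pt (partIdx θ))`, with structure maps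
induced by those of `V` between representative points. -/
def RefinementOf (V : SRep k Q) (C : CircPartition Q) (pt : ℤ → ℝ)
    (hper : ∀ j : ℤ, pt (j + (C.N : ℤ)) = pt j + 2 * Real.pi) (U : SRep k Q) : Prop :=
  (∀ j, pt j ∈ C.J j) ∧
  ∃ e : ∀ θ, U.obj θ ≃ₗ[k] V.obj (pt (C.partIdx θ)),
    (∀ {θ φ : ℝ} (h : Q.covRel θ φ) (hp : C.partIdx θ = C.partIdx φ) (v : U.obj θ),
        e φ (U.map h v) = V.castO (congrArg pt hp) (e θ v)) ∧
    (∀ {θ φ : ℝ} (h : Q.covRel θ φ)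
        (hc : Q.covRel (pt (C.partIdx θ)) (pt (C.partIdx φ))) (v : U.obj θ),
        e φ (U.map h v) = V.map hc (e θ v)) ∧
    (∀ (θ : ℝ) (v : U.obj (θ + 2 * Real.pi)),
        e θ (U.per θ v) = V.per (pt (C.partIdx θ))
          ((V.castO (show pt (C.partIdx (θ + 2 * Real.pi)) = pt (C.partIdx θ) + 2 * Real.pi by
            rw [C.partIdx_shift θ]; exact hper _)) (e (θ + 2 * Real.pi) v)))

end SRep
/-! ## The endomorphism ring -/

namespace SRep

variable {k : Type} [Field k] {Q : AtR}

/-- The endomorphism ring of a representation: the subring of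
`∀ θ, End (V θ)` consisting of the natural families (with multiplication given by
pointwise composition). -/
def endSubring (V : SRep k Q) : Subring (∀ θ, Module.End k (V.obj θ)) where
  carrier := {f | IsHomFam V V f}
  mul_mem' := by
    rintro a b ⟨ha1, ha2⟩ ⟨hb1, hb2⟩
    constructor
    · intro θ φ h v
      simp only [Pi.mul_apply, Module.End.mul_apply]
      rw [hb1 h v, ha1 h]
    · intro θ v
      simp only [Pi.mul_apply, Module.End.mul_apply]
      rw [hb2 θ v, ha2 θ]
  one_mem' := by
    constructor
    · intro θ φ h v; simp
    · intro θ v; simp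
  add_mem' := by
    rintro a b ⟨ha1, ha2⟩ ⟨hb1, hb2⟩
    constructor
    · intro θ φ h v
      simp only [Pi.add_apply, LinearMap.add_apply]
      rw [ha1 h v, hb1 h v, map_add]
    · intro θ v
      simp only [Pi.add_apply, LinearMap.add_apply]
      rw [ha2 θ v, hb2 θ v, map_add]
  zero_mem' := by
    constructor
    · intro θ φ h v; simp
    · intro θ v; simp
  neg_mem' := by
    rintro a ⟨ha1, ha2⟩
    constructor
    · intro θ φ h v
      simp only [Pi.neg_apply, LinearMap.neg_apply]
      rw [ha1 h v, map_neg]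
    · intro θ v
      simp only [Pi.neg_apply, LinearMap.neg_apply]
      rw [ha2 θ v, map_neg]

end SRep

section IntChain

-- The steps take a proof of `i + 1 = j` instead of landing in `L (i + 1)`, so that no casts
-- between fibres of `L` are needed.
variable {k : Type*} [Semiring k] {L : ℤ → Type*} [∀ j, AddCommMonoid (L j)]
  [∀ j, Module k (L j)] (σ : ∀ i j : ℤ, i + 1 = j → (L i ≃ₗ[k] L j))

def chainFromZero (j : ℤ) : L 0 ≃ₗ[k] L j :=
  Int.inductionOn' (motive := fun j => L 0 ≃ₗ[k] L j) j 0 (LinearEquiv.refl k (L 0))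
    (fun i _ f => f.trans (σ i (i + 1) rfl))
    (fun i _ f => f.trans (σ (i - 1) i (Int.sub_add_cancel i 1)).symm)

theorem chainFromZero_step {i j : ℤ} (h : i + 1 = j) :
    chainFromZero σ j = (chainFromZero σ i).trans (σ i j h) := by
  rcases le_or_gt 0 i with hi | hi
  · subst h
    exact Int.inductionOn'_add_one hi
  · obtain rfl : i = j - 1 := by omega
    have hpred : chainFromZero σ (j - 1) = (chainFromZero σ j).trans (σ (j - 1) j h).symm :=
      Int.inductionOn'_sub_one (by omega)
    ext v
    simp [hpred]

/-- The composite of the chain maps from `L i` to `L j`, or of their inverses if `j < i`. -/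
def chainTransport (i j : ℤ) : L i ≃ₗ[k] L j :=
  (chainFromZero σ i).symm.trans (chainFromZero σ j)

@[simp]
theorem chainTransport_self (i : ℤ) (v : L i) : chainTransport σ i i v = v := by
  simp [chainTransport]

@[simp]
theorem chainTransport_trans (i j l : ℤ) (v : L i) :
    chainTransport σ j l (chainTransport σ i j v) = chainTransport σ i l v := by
  simp [chainTransport]

theorem chainTransport_of_step {i j : ℤ} (h : i + 1 = j) (v : L i) :
    chainTransport σ i j v = σ i j h v := by
  simp [chainTransport, chainFromZero_step σ h]

theorem chainTransport_of_step_symm {i j : ℤ} (h : i + 1 = j) (v : L j) :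
    chainTransport σ j i v = (σ i j h).symm v := by
  simp [chainTransport, chainFromZero_step σ h]

theorem chainTransport_eq_of_compatible {X : Type*} [AddCommMonoid X] [Module k X]
    (Ψ : ∀ j, X ≃ₗ[k] L j) (hΨ : ∀ i j (h : i + 1 = j), Ψ j = (Ψ i).trans (σ i j h)) (i j : ℤ) :
    chainTransport σ i j = (Ψ i).symm.trans (Ψ j) := by
  set D := (Ψ 0).trans (chainFromZero σ 0).symm
  have hD : ∀ j, Ψ j = D.trans (chainFromZero σ j) := by
    intro j
    induction j using Int.induction_on with
    | zero => ext v; simp [D]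
    | succ i ih =>
      rw [hΨ i (i + 1) rfl, ih, chainFromZero_step σ (rfl : (i : ℤ) + 1 = i + 1)]
      rfl
    | pred i ih =>
      have h : -(i : ℤ) - 1 + 1 = -i := by ring
      have hstep := hΨ _ _ h
      rw [ih, chainFromZero_step σ h] at hstep
      ext v
      simpa using congrArg (fun f => (σ _ _ h).symm (f v)) hstep.symm
  ext v
  simp [chainTransport, hD]

end IntChain

namespace CycRep

variable {k : Type} [Field k] {N : ℕ} {o : ZMod N → Bool} (A : CycRep k N o)

@[simp]
theorem castM_castM {i i' i'' : ZMod N} (h : i = i') (h' : i' = i'') (v : A.M i) :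
    A.castM h' (A.castM h v) = A.castM (h.trans h') v := by
  subst h h'; rfl

@[simp]
theorem castM_self {i : ZMod N} (h : i = i) (v : A.M i) : A.castM h v = v := rfl

@[simp]
theorem castM_symm {i i' : ZMod N} (h : i = i') : (A.castM h).symm = A.castM h.symm := by
  subst h; rfl

theorem intCast_add_period (j : ℤ) : ((j + N : ℤ) : ZMod N) = j := by simp

variable (hup : ∀ (i : ZMod N) (h : o i = true), Function.Bijective (A.up i h))
  (hdown : ∀ (i : ZMod N) (h : o i = false), Function.Bijective (A.down i h))

theorem stepC_castM {i i' : ZMod N} (h : i = i') (v : A.M i) :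
    A.stepC hup hdown i' (A.castM h v) =
      A.castM (congrArg (· + 1) h) (A.stepC hup hdown i v) := by
  subst h; rfl

def stepZ (i j : ℤ) (h : i + 1 = j) : A.M i ≃ₗ[k] A.M j :=
  (A.stepC hup hdown i).trans (A.castM (by rw [← h]; push_cast; rfl))

theorem stepZ_castM {i j i' j' : ℤ} (h : i + 1 = j) (h' : i' + 1 = j')
    (hi : (i : ZMod N) = i') (hj : (j : ZMod N) = j') (v : A.M i) :
    A.stepZ hup hdown i' j' h' (A.castM hi v) = A.castM hj (A.stepZ hup hdown i j h v) := by
  simp [stepZ, stepC_castM]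

def transport (i j : ℤ) : A.M i ≃ₗ[k] A.M j :=
  chainTransport (L := fun j : ℤ => A.M j) (A.stepZ hup hdown) i j

@[simp]
theorem transport_self (i : ℤ) (v : A.M i) : A.transport hup hdown i i v = v :=
  chainTransport_self (L := fun j : ℤ => A.M j) _ i v

@[simp]
theorem transport_trans (i j l : ℤ) (v : A.M i) :
    A.transport hup hdown j l (A.transport hup hdown i j v) = A.transport hup hdown i l v :=
  chainTransport_trans (L := fun j : ℤ => A.M j) _ i j l v

theorem transport_of_eq {i j : ℤ} (h : i = j) (v : A.M i) :
    A.transport hup hdown i j v = A.castM (congrArg _ h) v := by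
  subst h; simp

theorem castM_transport (i : ℤ) {j j' : ℤ} (h : j = j') (v : A.M i) :
    A.castM (congrArg _ h) (A.transport hup hdown i j v) = A.transport hup hdown i j' v := by
  subst h; rfl

theorem transport_of_up {i j : ℤ} (h : i + 1 = j) (ht : o i = true) (v : A.M i) :
    A.transport hup hdown i j v = A.castM (by rw [← h]; push_cast; rfl) (A.up i ht v) := by
  rw [transport, chainTransport_of_step _ h]
  simp [stepZ, stepC, ht]

theorem transport_of_down {i j : ℤ} (h : i + 1 = j) (hf : o i = false) (v : A.M j) :
    A.transport hup hdown j i v = A.down i hf (A.castM (by rw [← h]; push_cast; rfl) v) := by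
  rw [transport, chainTransport_of_step_symm _ h]
  simp [stepZ, stepC, hf]

theorem transport_castM_period (i j : ℤ) (v : A.M (i + N : ℤ)) :
    A.transport hup hdown i j (A.castM (intCast_add_period i) v) =
      A.castM (intCast_add_period j) (A.transport hup hdown (i + N) (j + N) v) := by
  set σ := A.stepZ hup hdown
  have hcomp := chainTransport_eq_of_compatible σ
    (fun j => (chainFromZero σ (j + N)).trans (A.castM (intCast_add_period j))) (by
      intro i j h
      ext v
      simp [chainFromZero_step σ (show i + N + 1 = j + N by omega), σ,
        stepZ_castM (h := show i + N + 1 = j + N by omega) (h' := h)])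
  rw [transport, transport, hcomp]
  simp [σ, chainTransport]

def monodromyZ (j : ℤ) : A.M j ≃ₗ[k] A.M j :=
  (A.transport hup hdown j (j + N)).trans (A.castM (intCast_add_period j))

theorem monodromyZ_transport (i j : ℤ) (v : A.M i) :
    A.monodromyZ hup hdown j (A.transport hup hdown i j v) =
      A.transport hup hdown i j (A.monodromyZ hup hdown i v) := by
  simp [monodromyZ, transport_castM_period]

theorem castM_zigC (n : ℕ) (w : A.M 0) :
    A.castM (by push_cast; rfl) (A.zigC hup hdown n w) =
      A.transport hup hdown 0 n (A.castM (by simp) w) := by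
  induction n with
  | zero => simp [zigC]
  | succ n ih =>
    rw [← A.transport_trans hup hdown 0 n, ← ih, transport,
      chainTransport_of_step _ (by push_cast; rfl)]
    simp [zigC, stepZ, stepC_castM]

theorem castM_monodromyC (w : A.M 0) :
    A.castM (by simp) (A.monodromyC hup hdown w) =
      A.monodromyZ hup hdown 0 (A.castM (by simp) w) := by
  simp only [monodromyC, monodromyZ, LinearEquiv.trans_apply]
  rw [← A.castM_transport hup hdown 0 (zero_add (N : ℤ)).symm, ← castM_zigC]
  simp

end CycRep

theorem AtR.covRel_of_mem_uIcc {Q : AtR} {θ φ x : ℝ} (h : Q.covRel θ φ)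
    (hx : x ∈ Set.uIcc θ φ) : Q.covRel θ x ∧ Q.covRel x φ := by
  unfold AtR.covRel at h ⊢
  split_ifs at h ⊢ with hm
  · rw [Set.mem_uIcc] at hx
    constructor <;> rcases hx with hx | hx <;> linarith [hx.1, hx.2]
  · obtain ⟨j, hθ, hφ, dir⟩ := h
    have hxj : x ∈ Icc (Q.α j) (Q.α (j + 1)) := Set.uIcc_subset_Icc hθ hφ hx
    rw [Set.mem_uIcc] at hx
    refine ⟨⟨j, hθ, hxj, ?_⟩, ⟨j, hxj, hφ, ?_⟩⟩ <;>
      rcases dir with ⟨he, hle⟩ | ⟨ho, hle⟩ <;> rcases hx with hx | hx <;>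
      first
      | exact Or.inl ⟨he, by linarith [hx.1, hx.2]⟩
      | exact Or.inr ⟨ho, by linarith [hx.1, hx.2]⟩

theorem CircPartition.lt_of_partIdx_lt {Q : AtR} (C : CircPartition Q) {θ φ : ℝ}
    (h : C.partIdx θ < C.partIdx φ) : θ < φ :=
  C.ordered h _ (C.mem_partIdx θ) _ (C.mem_partIdx φ)

theorem CircPartition.intCast_partIdx_shift {Q : AtR} (C : CircPartition Q) (θ : ℝ) :
    ((C.partIdx (θ + 2 * Real.pi) : ℤ) : ZMod C.N) = C.partIdx θ :=
  C.partZ_shift θ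

theorem eq_bot_or_eq_bot_of_conj {k V W : Type*} [Semiring k] [AddCommMonoid V] [Module k V]
    [AddCommMonoid W] [Module k W] (g : V ≃ₗ[k] W) {f : V → V} {f' : W → W}
    (hg : ∀ v, g (f v) = f' (g v))
    (hV : ∀ A B : Submodule k V, IsCompl A B → (∀ a ∈ A, f a ∈ A) → (∀ b ∈ B, f b ∈ B) →
      A = ⊥ ∨ B = ⊥)
    (A B : Submodule k W) (hAB : IsCompl A B) (hA : ∀ a ∈ A, f' a ∈ A)
    (hB : ∀ b ∈ B, f' b ∈ B) : A = ⊥ ∨ B = ⊥ := by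
  set σ := Submodule.orderIsoMapComap g
  have hinv : ∀ P : Submodule k W, (∀ a ∈ P, f' a ∈ P) → ∀ a ∈ σ.symm P, f a ∈ σ.symm P := by
    intro P hP a ha
    simp only [σ, Submodule.orderIsoMapComap_symm_apply, Submodule.mem_comap,
      LinearEquiv.coe_coe] at ha ⊢
    rw [hg]
    exact hP _ ha
  refine (hV _ _ (σ.symm.isCompl hAB) (hinv A hA) (hinv B hB)).imp ?_ ?_ <;>
    intro h <;> simpa using congrArg σ h

namespace SRep

variable {k : Type} [Field k] {Q : AtR} {C : CircPartition Q} {o : ZMod C.N → Bool}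
  {M : CycRep k C.N o} (hM : M.IsJordan) {U : SRep k Q}

theorem PushdownOf.exists_transport
    (ho : ∀ j : ℤ, ((o (j : ZMod C.N) = true) ↔ C.dirUp j) ∧
      ((o (j : ZMod C.N) = false) ↔ C.dirDown j))
    (hU : PushdownOf C o M U) :
    ∃ e : ∀ θ, U.obj θ ≃ₗ[k] M.M (C.partIdx θ),
      (∀ {θ φ : ℝ} (h : Q.covRel θ φ) (v : U.obj θ), e φ (U.map h v) =
        M.transport hM.bijUp hM.bijDown (C.partIdx θ) (C.partIdx φ) (e θ v)) ∧
      ∀ (θ : ℝ) (v : U.obj (θ + 2 * Real.pi)),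
        e θ (U.per θ v) = M.castM (C.intCast_partIdx_shift θ) (e (θ + 2 * Real.pi) v) := by
  obtain ⟨e, hsame, hup, hdown, hper⟩ := hU
  refine ⟨e, ?_, hper⟩
  have adjacent : ∀ {θ φ : ℝ} (h : Q.covRel θ φ), (C.partIdx φ - C.partIdx θ).natAbs ≤ 1 →
      ∀ v, e φ (U.map h v) =
        M.transport hM.bijUp hM.bijDown (C.partIdx θ) (C.partIdx φ) (e θ v) := by
    intro θ φ h hd v
    obtain hp | hp | hp : C.partIdx θ = C.partIdx φ ∨ C.partIdx φ = C.partIdx θ + 1 ∨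
        C.partIdx θ = C.partIdx φ + 1 := by omega
    · rw [hsame h hp]
      exact (M.transport_of_eq _ _ hp _).symm
    · have ht := (ho _).1.2 ⟨θ, C.mem_partIdx θ, φ, hp ▸ C.mem_partIdx φ, h⟩
      rw [hup h hp ht]
      exact (M.transport_of_up _ _ hp.symm ht _).symm
    · have hf := (ho _).2.2 ⟨θ, hp ▸ C.mem_partIdx θ, φ, C.mem_partIdx φ, h⟩
      rw [hdown h hp hf]
      exact (M.transport_of_down _ _ hp.symm hf _).symm
  intro θ φ h
  induction hn : (C.partIdx φ - C.partIdx θ).natAbs using Nat.strong_induction_on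
    generalizing θ φ with
  | _ n ih =>
  intro v
  by_cases hd : n ≤ 1
  · exact adjacent h (hn ▸ hd) v
  -- factor through a point of a part strictly between those of `θ` and `φ`
  obtain ⟨j, hj⟩ : ∃ j, C.partIdx θ < j ∧ j < C.partIdx φ ∨ C.partIdx φ < j ∧ j < C.partIdx θ :=
    ⟨if C.partIdx θ < C.partIdx φ then C.partIdx θ + 1 else C.partIdx θ - 1, by split_ifs <;> omega⟩
  obtain ⟨x, hx⟩ := C.nonempty j
  have hpx := C.partIdx_eq hx
  have hxθφ : x ∈ Set.uIcc θ φ := by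
    rw [Set.mem_uIcc]
    rcases hj with hj | hj
    · exact Or.inl ⟨(C.lt_of_partIdx_lt (by omega)).le, (C.lt_of_partIdx_lt (by omega)).le⟩
    · exact Or.inr ⟨(C.lt_of_partIdx_lt (by omega)).le, (C.lt_of_partIdx_lt (by omega)).le⟩
  obtain ⟨h₁, h₂⟩ := AtR.covRel_of_mem_uIcc h hxθφ
  rw [U.map_comp h₁ h₂ h, LinearMap.comp_apply, ih _ (by omega) h₂ rfl,
    ih _ (by omega) h₁ rfl]
  exact M.transport_trans _ _ _ _ _ _

variable {e : ∀ θ, U.obj θ ≃ₗ[k] M.M (C.partIdx θ)}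
  (he : ∀ {θ φ : ℝ} (h : Q.covRel θ φ) (v : U.obj θ), e φ (U.map h v) =
    M.transport hM.bijUp hM.bijDown (C.partIdx θ) (C.partIdx φ) (e θ v))

theorem apply_castO_eq_transport {θ φ : ℝ} (h : θ = φ) (v : U.obj θ) :
    e φ (U.castO h v) = M.transport hM.bijUp hM.bijDown (C.partIdx θ) (C.partIdx φ) (e θ v) := by
  subst h
  exact (M.transport_self _ _ _ _).symm

include he

theorem bijective_map_of_transport ⦃θ φ : ℝ⦄ (h : Q.covRel θ φ) :
    Function.Bijective (U.map h) := by
  have hfac : ⇑(U.map h) = ⇑(((e θ).trans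
      (M.transport hM.bijUp hM.bijDown (C.partIdx θ) (C.partIdx φ))).trans (e φ).symm) := by
    funext v
    show _ = (e φ).symm (M.transport _ _ _ _ (e θ v))
    rw [LinearEquiv.eq_symm_apply, he]
  rw [hfac]
  exact LinearEquiv.bijective _

theorem apply_ofBijective_symm_eq_transport {θ φ : ℝ} (h : Q.covRel θ φ)
    (hb : Function.Bijective (U.map h)) (w : U.obj φ) :
    e θ ((LinearEquiv.ofBijective (U.map h) hb).symm w) =
      M.transport hM.bijUp hM.bijDown (C.partIdx φ) (C.partIdx θ) (e φ w) := by
  obtain ⟨v, rfl⟩ := hb.2 w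
  rw [LinearEquiv.ofBijective_symm_apply_apply, he, M.transport_trans, M.transport_self]

variable (hbij : ∀ ⦃θ φ : ℝ⦄ (h : Q.covRel θ φ), Function.Bijective (U.map h))

theorem apply_step_eq_transport (j : ℤ) (v : U.obj (Q.α j)) :
    e (Q.α (j + 1)) (U.step hbij j v) =
      M.transport hM.bijUp hM.bijDown (C.partIdx (Q.α j)) (C.partIdx (Q.α (j + 1)))
        (e (Q.α j) v) := by
  unfold step
  split_ifs
  · exact he _ v
  · exact apply_ofBijective_symm_eq_transport hM he _ _ v

theorem apply_zig_eq_transport (n : ℕ) (v : U.obj (Q.α 0)) :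
    e (Q.α n) (U.zig hbij n v) =
      M.transport hM.bijUp hM.bijDown (C.partIdx (Q.α 0)) (C.partIdx (Q.α n)) (e (Q.α 0) v) := by
  induction n with
  | zero => exact apply_castO_eq_transport hM _ v
  | succ n ih =>
    rw [zig, LinearEquiv.trans_apply, LinearEquiv.trans_apply, apply_castO_eq_transport hM,
      apply_step_eq_transport hM he, ih, M.transport_trans, M.transport_trans]

theorem apply_monodromy_eq_monodromyZ
    (hper : ∀ (θ : ℝ) (v : U.obj (θ + 2 * Real.pi)),
      e θ (U.per θ v) = M.castM (C.intCast_partIdx_shift θ) (e (θ + 2 * Real.pi) v))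
    (v : U.obj (Q.α 0)) :
    e (Q.α 0) (U.monodromy hbij v) =
      M.monodromyZ hM.bijUp hM.bijDown (C.partIdx (Q.α 0)) (e (Q.α 0) v) := by
  rw [monodromy, LinearEquiv.trans_apply, LinearEquiv.trans_apply, hper,
    apply_castO_eq_transport hM, apply_zig_eq_transport hM he, M.transport_trans,
    ← M.transport_trans _ _ _ (C.partIdx (Q.α 0) + C.N),
    M.transport_of_eq _ _ (C.partIdx_shift _).symm, CycRep.castM_castM]
  rfl

end SRep

/-- If the auxiliary quiver of the partition `C` is the `Ã_{N-1}` quiver with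
orientation `o` and `M` is a Jordan cell representation of it, then its push down
is a Jordan cell of the continuous quiver. -/
theorem pushdown_jordan {k : Type} [Field k] {Q : AtR} (C : CircPartition Q)
    (o : ZMod C.N → Bool)
    (ho : ∀ j : ℤ, ((o (j : ZMod C.N) = true) ↔ C.dirUp j) ∧
      ((o (j : ZMod C.N) = false) ↔ C.dirDown j))
    (M : CycRep k C.N o) (hM : CycRep.IsJordan M)
    (U : SRep k Q) (hU : SRep.PushdownOf C o M U) : SRep.IsJordanCell U := by
  obtain ⟨e, he, hper⟩ := hU.exists_transport hM ho
  have hbij := SRep.bijective_map_of_transport hM he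
  let g : M.M 0 ≃ₗ[k] U.obj (Q.α 0) := ((M.castM Int.cast_zero.symm).trans
    (M.transport hM.bijUp hM.bijDown 0 (C.partIdx (Q.α 0)))).trans (e (Q.α 0)).symm
  have hg : ∀ w, g (M.monodromyC hM.bijUp hM.bijDown w) = U.monodromy hbij (g w) := by
    intro w
    apply (e (Q.α 0)).injective
    simp [g, SRep.apply_monodromy_eq_monodromyZ hM he hbij hper, CycRep.castM_monodromyC,
      CycRep.monodromyZ_transport]
  obtain ⟨d, hd, hdim⟩ := hM.dim
  exact ⟨hbij, ⟨d, hd, fun θ => (e θ).finrank_eq.trans (hdim _)⟩,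
    eq_bot_or_eq_bot_of_conj g hg hM.indec⟩
end
end

section
/- Every bar of Ã_ℝ and every Jordan cell of Ã_ℝ is an indecomposable representation of Ã_ℝ. -/
open Set

noncomputable section

variable (k : Type) [Field k]

variable {k}

variable (k : Type) [Field k]

variable {k}

/-!
An isomorphism `V ≅ A × B` with `A`, `B` nonzero yields an idempotent endomorphism of `V` other
than `0` and `1`, so it suffices that `End V` has no other idempotents.

For a Jordan cell all structure maps are invertible, so an endomorphism is determined by its value
at `α 0`, where it commutes with the monodromy; the range and kernel of an idempotent are then
complementary invariant subspaces, one of which must vanish.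

For a bar `M_I`, an endomorphism is a matrix `(a r c)` indexed by pairs of lifts `r ≡ c` in `I`.
Naturality along the structure maps makes `a r c` depend only on `r - c`. At the lower end of `I`
some structure map either enters `I` from outside or leaves `I`; translating it by `c - r` shows
that `a r c = 0` for all `r < c`, respectively for all `r > c`. So the matrix is triangular with
constant diagonal `λ`: an idempotent vanishes if `λ ≠ 1`, and `1` minus it vanishes if `λ = 1`.
-/

open AddCommGroup

lemma Int.exists_le_and_lt_succ_of_monotone {α : Type*} [LinearOrder α] {f : ℤ → α}
    (hf : Monotone f) {x : α} (hlo : ∃ j, f j ≤ x) (hhi : ∃ j, x < f j) :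
    ∃ t, f t ≤ x ∧ x < f (t + 1) := by
  classical
  obtain ⟨b, hb⟩ := hhi
  have hbdd : ∃ b, ∀ j, f j ≤ x → j ≤ b :=
    ⟨b, fun j hj => le_of_not_gt fun hbj => (hb.trans_le (hf hbj.le)).not_ge hj⟩
  obtain ⟨t, ht, hmax⟩ := Int.exists_greatest_of_bdd hbdd hlo
  exact ⟨t, ht, lt_of_not_ge fun h => (hmax _ h).not_gt (Int.lt_succ t)⟩

lemma AddCommGroup.ModEq.le_sub_of_lt {p a b : ℝ} (hp : 0 < p) (h : a ≡ b [PMOD p])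
    (hab : a < b) : p ≤ b - a := by
  obtain ⟨n, rfl⟩ := modEq_iff_eq_add_zsmul.mp h
  rw [zsmul_eq_mul, add_sub_cancel_left] at *
  have hn : (1 : ℝ) ≤ n := by
    exact_mod_cast Int.cast_pos.mp (pos_of_mul_pos_left (by linarith) hp.le)
  nlinarith

lemma AddCommGroup.ModEq.sub_add {G : Type*} [AddCommGroup G] {p a b : G} (c : G)
    (h : a ≡ b [PMOD p]) : c ≡ b - a + c [PMOD p] := by
  obtain ⟨n, rfl⟩ := modEq_iff_eq_add_zsmul.mp h
  exact modEq_iff_eq_add_zsmul.mpr ⟨n, by abel⟩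

theorem IsIdempotentElem.eq_zero_or_eq_one_of_commute {R M : Type*} [Ring R] [AddCommGroup M]
    [Module R M] {p T : Module.End R M} (hp : IsIdempotentElem p) (hpT : Commute p T)
    (hT : ∀ U W : Submodule R M, IsCompl U W → (∀ u ∈ U, T u ∈ U) → (∀ w ∈ W, T w ∈ W) →
      U = ⊥ ∨ W = ⊥) :
    p = 0 ∨ p = 1 := by
  have hcomm (v : M) : p (T v) = T (p v) := LinearMap.congr_fun hpT v
  have hrange : ∀ u ∈ LinearMap.range p, T u ∈ LinearMap.range p := by
    rintro _ ⟨y, rfl⟩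
    exact ⟨T y, hcomm y⟩
  have hker : ∀ w ∈ LinearMap.ker p, T w ∈ LinearMap.ker p := by
    intro w hw
    rw [LinearMap.mem_ker] at hw ⊢
    rw [hcomm, hw, map_zero]
  rcases hT _ _ (LinearMap.IsIdempotentElem.isCompl hp) hrange hker with h | h
  · exact .inl (LinearMap.range_eq_bot.mp h)
  · exact .inr (LinearMap.ext fun v => LinearMap.ker_eq_bot.mp h (LinearMap.congr_fun hp v))

namespace AtR

variable {Q : AtR}

lemma two_le_periodN : 2 ≤ Q.periodN := by
  unfold periodN; split_ifs <;> omega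

lemma α_add_periodN (j : ℤ) : Q.α (j + Q.periodN) = Q.α j + 2 * Real.pi := by
  unfold periodN
  split_ifs with hm
  · rw [Q.cyc hm, Q.cyc hm]; push_cast; ring
  · rw [← Q.per hm j]; push_cast; rfl

lemma α_add_mul_periodN (j n : ℤ) :
    Q.α (j + n * Q.periodN) = Q.α j + n * (2 * Real.pi) := by
  induction n using Int.induction_on with
  | zero => simp
  | succ n ih =>
    rw [show j + (n + 1) * Q.periodN = j + n * Q.periodN + Q.periodN by ring, α_add_periodN, ih]
    push_cast; ring
  | pred n ih =>
    have h := α_add_periodN (Q := Q) (j + (-n - 1) * Q.periodN)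
    rw [show j + (-n - 1) * Q.periodN + Q.periodN = j + -n * Q.periodN by ring, ih] at h
    push_cast at h ⊢; linarith

lemma α_succ_sub_lt (j : ℤ) : Q.α (j + 1) - Q.α j < 2 * Real.pi := by
  have h : Q.α (j + 1) < Q.α (j + Q.periodN) := Q.mono (by have := Q.two_le_periodN; omega)
  rw [α_add_periodN] at h
  linarith

lemma exists_arc (x : ℝ) : ∃ t : ℤ, Q.α t ≤ x ∧ x < Q.α (t + 1) := by
  have hα (n : ℤ) : Q.α (n * Q.periodN) = Q.α 0 + n * (2 * Real.pi) := by
    simpa using α_add_mul_periodN (Q := Q) 0 n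
  have hπ : 0 < 2 * Real.pi := by positivity
  refine Int.exists_le_and_lt_succ_of_monotone Q.mono.monotone ?_ ?_
  · obtain ⟨n, hn⟩ := exists_int_lt ((x - Q.α 0) / (2 * Real.pi))
    refine ⟨n * Q.periodN, ?_⟩
    rw [hα]
    linarith [(lt_div_iff₀ hπ).mp hn]
  · obtain ⟨n, hn⟩ := exists_int_gt ((x - Q.α 0) / (2 * Real.pi))
    refine ⟨n * Q.periodN, ?_⟩
    rw [hα]
    linarith [(div_lt_iff₀ hπ).mp hn]

lemma covRel_of_mem_arc_of_up {t : ℤ} (ht : Q.m = 0 ∨ ¬ Even t) {u v : ℝ}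
    (hu : u ∈ Icc (Q.α t) (Q.α (t + 1))) (hv : v ∈ Icc (Q.α t) (Q.α (t + 1))) (huv : u ≤ v) :
    Q.covRel u v := by
  unfold covRel
  split_ifs with hm
  · exact huv
  · exact ⟨t, hu, hv, .inr ⟨ht.resolve_left hm, huv⟩⟩

lemma covRel_of_mem_arc_of_down {t : ℤ} (hm : Q.m ≠ 0) (ht : Even t) {u v : ℝ}
    (hu : u ∈ Icc (Q.α t) (Q.α (t + 1))) (hv : v ∈ Icc (Q.α t) (Q.α (t + 1))) (huv : u ≤ v) :
    Q.covRel v u := by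
  unfold covRel
  rw [if_neg hm]
  exact ⟨t, hv, hu, .inl ⟨ht, huv⟩⟩

lemma covRel_or_covRel_of_mem_arc {t : ℤ} {u v : ℝ}
    (hu : u ∈ Icc (Q.α t) (Q.α (t + 1))) (hv : v ∈ Icc (Q.α t) (Q.α (t + 1))) (huv : u ≤ v) :
    Q.covRel u v ∨ Q.covRel v u := by
  by_cases ht : Q.m = 0 ∨ ¬ Even t
  · exact .inl (covRel_of_mem_arc_of_up ht hu hv huv)
  · push Not at ht
    exact .inr (covRel_of_mem_arc_of_down ht.1 ht.2 hu hv huv)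

lemma covRel_add_of_modEq {x y s : ℝ} (h : Q.covRel x y) (hs : s ≡ 0 [PMOD 2 * Real.pi]) :
    Q.covRel (x + s) (y + s) := by
  obtain ⟨n, rfl⟩ := modEq_iff_eq_add_zsmul.mp hs.symm
  rw [zero_add, zsmul_eq_mul]
  unfold covRel at h ⊢
  split_ifs at h ⊢ with hm
  · linarith
  · obtain ⟨j, hx, hy, hdir⟩ := h
    have hj := α_add_mul_periodN (Q := Q) j n
    have hj1 := α_add_mul_periodN (Q := Q) (j + 1) n
    rw [show j + 1 + n * Q.periodN = j + n * Q.periodN + 1 by ring] at hj1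
    have heven : Even (j + n * Q.periodN) ↔ Even j := by
      simp only [periodN, if_neg hm]
      push_cast
      exact Int.even_add.trans (by simp [even_two])
    refine ⟨j + n * Q.periodN, ?_, ?_, ?_⟩
    · rw [hj, hj1]; exact ⟨by linarith [hx.1], by linarith [hx.2]⟩
    · rw [hj, hj1]; exact ⟨by linarith [hy.1], by linarith [hy.2]⟩
    · rw [heven]
      rcases hdir with ⟨he, hle⟩ | ⟨ho, hle⟩
      · exact .inl ⟨he, by linarith⟩
      · exact .inr ⟨ho, by linarith⟩

theorem iff_of_covRel {J : Set ℝ} (hJ : J.OrdConnected) (P : ℝ → Prop)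
    (hP : ∀ u ∈ J, ∀ v ∈ J, u ≤ v → Q.covRel u v ∨ Q.covRel v u → (P u ↔ P v))
    {a b : ℝ} (ha : a ∈ J) (hb : b ∈ J) : P a ↔ P b := by
  wlog hab : a ≤ b generalizing a b
  · exact (this hb ha (le_of_not_ge hab)).symm
  obtain ⟨t, hta, hat⟩ := Q.exists_arc a
  obtain ⟨j, hjb, hbj⟩ := Q.exists_arc b
  have htj : t ≤ j := by
    by_contra! h
    linarith [Q.mono.monotone (show j + 1 ≤ t by omega)]
  suffices ∀ i, t ≤ i → ∀ b ∈ J, a ≤ b → b ≤ Q.α (i + 1) → (P a ↔ P b) from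
    this j htj b hb hab hbj.le
  intro i hi
  induction i, hi using Int.leInduction with
  | base =>
    exact fun b hb hab hbt =>
      hP a ha b hb hab (covRel_or_covRel_of_mem_arc ⟨hta, hat.le⟩ ⟨hta.trans hab, hbt⟩ hab)
  | succ i hi ih =>
    intro b hb hab hbi
    by_cases hb' : b ≤ Q.α (i + 1)
    · exact ih b hb hab hb'
    push Not at hb'
    have haw : a ≤ Q.α (i + 1) := hat.le.trans (Q.mono.monotone (by omega))
    have hw : Q.α (i + 1) ∈ J := hJ.out ha hb ⟨haw, hb'.le⟩
    refine (ih _ hw haw le_rfl).trans (hP _ hw b hb hb'.le ?_)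
    exact covRel_or_covRel_of_mem_arc ⟨le_rfl, Q.mono.monotone (by omega)⟩ ⟨hb'.le, hbi⟩ hb'.le

lemma exists_arc_below {I : Set ℝ} (hne : I.Nonempty) (hbdd : BddBelow I)
    (hI : I.OrdConnected) :
    ∃ t : ℤ, (∀ z ∈ I, Q.α t < z) ∧ ∀ ρ ∈ I, ∃ y ∈ I, y ≤ ρ ∧ y ≤ Q.α (t + 1) := by
  obtain ⟨t, hti, hit⟩ := Q.exists_arc (sInf I)
  have hinf : ∀ z ∈ I, Q.α t ≤ z := fun z hz => hti.trans (csInf_le hbdd hz)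
  by_cases htI : Q.α t ∈ I
  · refine ⟨t - 1, fun z hz => (Q.mono (by omega)).trans_le (hinf z hz),
      fun ρ hρ => ⟨Q.α t, htI, hinf ρ hρ, by rw [sub_add_cancel]⟩⟩
  · refine ⟨t, fun z hz => (hinf z hz).lt_of_ne (fun h => htI (h ▸ hz)), fun ρ hρ => ?_⟩
    obtain ⟨z, hz, hzt⟩ := exists_lt_of_csInf_lt hne hit
    rcases le_total ρ (Q.α (t + 1)) with h | h
    · exact ⟨ρ, hρ, le_rfl, h⟩
    · exact ⟨Q.α (t + 1), hI.out hz hρ ⟨hzt.le, h⟩, h, le_rfl⟩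

end AtR

section BarCoordinates

variable {k : Type} [Field k] {I : Set ℝ}

def barPt {θ β : ℝ} (hβ : β ∈ I) (h : θ ≡ β [PMOD 2 * Real.pi]) : barIdx I θ :=
  ⟨β, hβ, by
    obtain ⟨n, hn⟩ := modEq_iff_eq_add_zsmul.mp h
    exact ⟨n, by rw [hn, zsmul_eq_mul, mul_comm]⟩⟩

@[simp]
lemma barPt_val {θ β : ℝ} (hβ : β ∈ I) (h : θ ≡ β [PMOD 2 * Real.pi]) : (barPt hβ h).1 = β :=
  rfl

lemma barIdx_modEq {θ : ℝ} (b : barIdx I θ) : θ ≡ b.1 [PMOD 2 * Real.pi] := by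
  obtain ⟨n, hn⟩ := b.2.2
  exact modEq_iff_eq_add_zsmul.mpr ⟨n, by rw [hn, zsmul_eq_mul, mul_comm]⟩

lemma barMapHom_single_of_eq {x y : ℝ} {b : barIdx I x} {b' : barIdx I y}
    (h : b.1 - x + y = b'.1) (a : k) :
    barMapHom k I x y (Finsupp.single b a) = Finsupp.single b' a := by
  unfold barMapHom
  rw [Finsupp.linearCombination_single, dif_pos (h ▸ b'.2.1), ← Finsupp.smul_single_one b' a]
  congr 2
  exact Subtype.ext h

lemma barMapHom_single_of_notMem {x y : ℝ} {b : barIdx I x} (h : b.1 - x + y ∉ I) (a : k) :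
    barMapHom k I x y (Finsupp.single b a) = 0 := by
  unfold barMapHom
  rw [Finsupp.linearCombination_single, dif_neg h, smul_zero]

lemma barMapHom_apply_of_eq {x y : ℝ} (w : barIdx I x →₀ k) {b : barIdx I x} {b' : barIdx I y}
    (h : b.1 - x + y = b'.1) : barMapHom k I x y w b' = w b := by
  classical
  induction w using Finsupp.induction_linear with
  | zero => simp
  | add u v hu hv => simp [hu, hv]
  | single β a =>
    by_cases hβ : β = b
    · subst hβ
      rw [barMapHom_single_of_eq h, Finsupp.single_eq_same, Finsupp.single_eq_same]
    rw [Finsupp.single_apply, if_neg hβ]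
    by_cases hβI : β.1 - x + y ∈ I
    · rw [barMapHom_single_of_eq (b' := barPt hβI ((barIdx_modEq β).sub_add y)) rfl,
        Finsupp.single_apply, if_neg]
      intro heq
      have := congrArg Subtype.val heq
      exact hβ (Subtype.ext (by simp only [barPt_val] at this; linarith))
    · rw [barMapHom_single_of_notMem hβI, Finsupp.zero_apply]

lemma barMapHom_apply_of_notMem {x y : ℝ} (w : barIdx I x →₀ k) {b' : barIdx I y}
    (h : b'.1 - y + x ∉ I) : barMapHom k I x y w b' = 0 := by
  classical
  induction w using Finsupp.induction_linear with
  | zero => simp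
  | add u v hu hv => simp [hu, hv]
  | single β a =>
    by_cases hβI : β.1 - x + y ∈ I
    · rw [barMapHom_single_of_eq (b' := barPt hβI ((barIdx_modEq β).sub_add y)) rfl,
        Finsupp.single_apply, if_neg]
      intro heq
      have := congrArg Subtype.val heq
      simp only [barPt_val] at this
      exact h (by rw [show b'.1 - y + x = β.1 by linarith]; exact β.2.1)
    · rw [barMapHom_single_of_notMem hβI, Finsupp.zero_apply]

structure IsBarEnd (Q : AtR) (g : ∀ θ, Module.End k (barIdx I θ →₀ k)) : Prop where
  map_comm : ∀ ⦃x y : ℝ⦄ (_ : Q.covRel x y) (v : barIdx I x →₀ k),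
    g y (barMapHom k I x y v) = barMapHom k I x y (g x v)
  per_comm : ∀ (θ : ℝ) (v : barIdx I (θ + 2 * Real.pi) →₀ k),
    g θ (Finsupp.equivMapDomain (barShift I θ) v) =
      Finsupp.equivMapDomain (barShift I θ) (g (θ + 2 * Real.pi) v)

open Classical in
/-- The entry of `g θ` in row `r` and column `c`, basis vectors of `barIdx I θ` being indexed by
their lifts in `I`; it is `0` unless `r` and `c` are such lifts. -/
def barCoef (g : ∀ θ, Module.End k (barIdx I θ →₀ k)) (θ r c : ℝ) : k :=
  if h : r ∈ I ∧ c ∈ I ∧ θ ≡ r [PMOD 2 * Real.pi] ∧ θ ≡ c [PMOD 2 * Real.pi] then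
    g θ (Finsupp.single (barPt h.2.1 h.2.2.2) 1) (barPt h.1 h.2.2.1)
  else 0

def barEntry (g : ∀ θ, Module.End k (barIdx I θ →₀ k)) (r c : ℝ) : k := barCoef g c r c

variable {Q : AtR} {g : ∀ θ, Module.End k (barIdx I θ →₀ k)}

lemma barCoef_eq {θ : ℝ} (b b' : barIdx I θ) :
    barCoef g θ b'.1 b.1 = g θ (Finsupp.single b 1) b' := by
  rw [barCoef, dif_pos ⟨b'.2.1, b.2.1, barIdx_modEq b', barIdx_modEq b⟩]
  rfl

lemma mem_of_barEntry_ne_zero {r c : ℝ} (h : barEntry g r c ≠ 0) :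
    r ∈ I ∧ c ∈ I ∧ c ≡ r [PMOD 2 * Real.pi] := by
  by_contra hn
  exact h (dif_neg fun h' => hn ⟨h'.1, h'.2.1, h'.2.2.1⟩)

lemma barEntry_eq_zero_of_notMem_left {r c : ℝ} (hr : r ∉ I) : barEntry g r c = 0 :=
  dif_neg fun h => hr h.1

lemma barEntry_eq_zero_of_notMem_right {r c : ℝ} (hc : c ∉ I) : barEntry g r c = 0 :=
  dif_neg fun h => hc h.2.1

lemma barEntry_self_eq {c : ℝ} (hc : c ∈ I) :
    barEntry g c c = g c (Finsupp.single (barPt hc modEq_rfl) 1) (barPt hc modEq_rfl) :=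
  barCoef_eq (barPt hc modEq_rfl) (barPt hc modEq_rfl)

lemma barEntry_one_sub_self {c : ℝ} (hc : c ∈ I) : barEntry (1 - g) c c = 1 - barEntry g c c := by
  simp [barEntry_self_eq hc]

namespace IsBarEnd

lemma one_sub (hg : IsBarEnd Q g) : IsBarEnd Q (1 - g) where
  map_comm x y h v := by simp [hg.map_comm h]
  per_comm θ v := by ext; simp [hg.per_comm θ]

lemma barCoef_add_two_pi (hg : IsBarEnd Q g) (θ r c : ℝ) :
    barCoef g (θ + 2 * Real.pi) r c = barCoef g θ r c := by
  have hshift : θ + 2 * Real.pi ≡ θ [PMOD 2 * Real.pi] := add_modEq_left.mpr self_modEq_zero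
  by_cases h : r ∈ I ∧ c ∈ I ∧ θ ≡ r [PMOD 2 * Real.pi] ∧ θ ≡ c [PMOD 2 * Real.pi]
  · obtain ⟨hr, hc, hθr, hθc⟩ := h
    have key := hg.per_comm θ (Finsupp.single (barPt hc (hshift.trans hθc)) 1)
    rw [Finsupp.equivMapDomain_single] at key
    have := congrArg (· (barPt hr hθr)) key
    simp only [Finsupp.equivMapDomain_apply] at this
    rw [← barCoef_eq, ← barCoef_eq] at this
    exact this.symm
  · rw [barCoef, barCoef, dif_neg h, dif_neg]
    exact fun h' => h ⟨h'.1, h'.2.1, hshift.symm.trans h'.2.2.1, hshift.symm.trans h'.2.2.2⟩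

lemma barCoef_congr (hg : IsBarEnd Q g) {θ θ' : ℝ} (h : θ ≡ θ' [PMOD 2 * Real.pi]) (r c : ℝ) :
    barCoef g θ r c = barCoef g θ' r c := by
  obtain ⟨n, rfl⟩ := modEq_iff_eq_add_zsmul.mp h
  have hper : Function.Periodic (fun θ => barCoef g θ r c) (2 * Real.pi) :=
    fun θ => hg.barCoef_add_two_pi θ r c
  exact (hper.zsmul n θ).symm

lemma apply_single_apply (hg : IsBarEnd Q g) {θ : ℝ} (b b' : barIdx I θ) :
    g θ (Finsupp.single b 1) b' = barEntry g b'.1 b.1 := by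
  rw [← barCoef_eq, barEntry, hg.barCoef_congr (barIdx_modEq b)]

lemma apply_apply (hg : IsBarEnd Q g) {θ : ℝ} (w : barIdx I θ →₀ k) (b : barIdx I θ) :
    g θ w b = w.sum fun β a => a * barEntry g b.1 β.1 := by
  conv_lhs => rw [← Finsupp.sum_single w]
  rw [map_finsuppSum, Finsupp.sum_apply]
  refine Finsupp.sum_congr fun β _ => ?_
  rw [← Finsupp.smul_single_one, map_smul, Finsupp.smul_apply, hg.apply_single_apply, smul_eq_mul]

lemma barEntry_eq_of_covRel (hg : IsBarEnd Q g) {x y r : ℝ} (hxy : Q.covRel x y) (hx : x ∈ I)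
    (hxr : x ≡ r [PMOD 2 * Real.pi]) (hr : r + (y - x) ∈ I) :
    barEntry g (r + (y - x)) y = barEntry g r x := by
  have hyr : y ≡ r + (y - x) [PMOD 2 * Real.pi] := by
    obtain ⟨n, rfl⟩ := modEq_iff_eq_add_zsmul.mp hxr
    exact modEq_iff_eq_add_zsmul.mpr ⟨n, by ring⟩
  have key := congrArg (· (barPt hr hyr))
    (hg.map_comm hxy (Finsupp.single (barPt hx modEq_rfl) 1))
  have hLHS : g y (barMapHom k I x y (Finsupp.single (barPt hx modEq_rfl) 1)) (barPt hr hyr) =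
      barEntry g (r + (y - x)) y := by
    by_cases hy : y ∈ I
    · rw [barMapHom_single_of_eq (b' := barPt hy modEq_rfl) (by simp), hg.apply_single_apply,
        barPt_val, barPt_val]
    · rw [barMapHom_single_of_notMem (by simpa using hy), map_zero, Finsupp.zero_apply]
      exact (barEntry_eq_zero_of_notMem_right hy).symm
  have hRHS : barMapHom k I x y (g x (Finsupp.single (barPt hx modEq_rfl) 1)) (barPt hr hyr) =
      barEntry g r x := by
    by_cases hrI : r ∈ I
    · rw [barMapHom_apply_of_eq (b := barPt hrI hxr) _ (by simp; ring), hg.apply_single_apply,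
        barPt_val, barPt_val]
    · rw [barMapHom_apply_of_notMem _ (by rwa [barPt_val, show r + (y - x) - y + x = r by ring])]
      exact (barEntry_eq_zero_of_notMem_left hrI).symm
  rw [← hLHS, ← hRHS, key]

lemma barEntry_eq_of_sub_eq (hg : IsBarEnd Q g) (hI : I.OrdConnected) {r c r' c' : ℝ}
    (hr : r ∈ I) (hc : c ∈ I) (hr' : r' ∈ I) (hc' : c' ∈ I) (hcr : c ≡ r [PMOD 2 * Real.pi])
    (h : r - c = r' - c') : barEntry g r c = barEntry g r' c' := by
  obtain ⟨s, rfl⟩ : ∃ s, r = c + s := ⟨r - c, by ring⟩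
  obtain rfl : r' = c' + s := by linarith
  have hs (w : ℝ) : w ≡ w + s [PMOD 2 * Real.pi] :=
    (add_modEq_left.mpr (add_modEq_left.mp hcr.symm)).symm
  have hJ : {w | w ∈ I ∧ w + s ∈ I}.OrdConnected :=
    ⟨fun a ha b hb w hw => ⟨hI.out ha.1 hb.1 hw,
      hI.out ha.2 hb.2 ⟨by linarith [hw.1], by linarith [hw.2]⟩⟩⟩
  have hstep {u v : ℝ} (hu : u ∈ I) (hvs : v + s ∈ I) (huv : Q.covRel u v) :
      barEntry g (u + s) u = barEntry g (v + s) v := by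
    have := hg.barEntry_eq_of_covRel huv hu (hs u) (by rwa [show u + s + (v - u) = v + s by ring])
    rwa [show u + s + (v - u) = v + s by ring, eq_comm] at this
  refine (AtR.iff_of_covRel (Q := Q) hJ (fun w => barEntry g (c + s) c = barEntry g (w + s) w) ?_
    ⟨hc, hr⟩ ⟨hc', hr'⟩).mp rfl
  rintro u hu v hv - (huv | huv)
  · rw [hstep hu.1 hv.2 huv]
  · rw [hstep hv.1 hu.2 huv]

/-- The translate of `x → y` by `c - r` lies in `I`, and its naturality equates `barEntry g r c`
with an entry in row `x ∉ I`. -/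
lemma barEntry_eq_zero_of_covRel_into (hg : IsBarEnd Q g) (hI : I.OrdConnected) {x y r c : ℝ}
    (hxy : Q.covRel x y) (hx : x ∉ I) (hy : y ∈ I) (hle : x ≤ y) (hlen : y - x < 2 * Real.pi)
    (hr : r ∈ I) (hc : c ∈ I) (hcr : c ≡ r [PMOD 2 * Real.pi]) (hyr : y ≤ r) (hrc : r < c) :
    barEntry g r c = 0 := by
  set d := c - r
  have hd : d ≡ 0 [PMOD 2 * Real.pi] := sub_modEq_zero.mpr hcr
  have hd2π : 2 * Real.pi ≤ d := hcr.symm.le_sub_of_lt Real.two_pi_pos hrc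
  have hyd : y + d ∈ I := hI.out hy hc ⟨by linarith, by linarith⟩
  have hxd : x + d ∈ I := hI.out hy hyd ⟨by linarith, by linarith⟩
  calc barEntry g r c = barEntry g y (y + d) :=
        hg.barEntry_eq_of_sub_eq hI hr hc hy hyd hcr (by ring)
    _ = barEntry g x (x + d) := by
      have := hg.barEntry_eq_of_covRel (Q.covRel_add_of_modEq hxy hd) hxd
        (add_modEq_left.mpr hd) (by rwa [show x + (y + d - (x + d)) = y by ring])
      rwa [show x + (y + d - (x + d)) = y by ring] at this
    _ = 0 := barEntry_eq_zero_of_notMem_left hx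

lemma barEntry_eq_zero_of_covRel_out (hg : IsBarEnd Q g) (hI : I.OrdConnected) {x y r c : ℝ}
    (hxy : Q.covRel x y) (hx : x ∈ I) (hy : y ∉ I) (hle : y ≤ x) (hlen : x - y < 2 * Real.pi)
    (hr : r ∈ I) (hc : c ∈ I) (hcr : c ≡ r [PMOD 2 * Real.pi]) (hxc : x ≤ c) (hcr' : c < r) :
    barEntry g r c = 0 := by
  set d := r - c
  have hd : d ≡ 0 [PMOD 2 * Real.pi] := sub_modEq_zero.mpr hcr.symm
  have hd2π : 2 * Real.pi ≤ d := hcr.le_sub_of_lt Real.two_pi_pos hcr'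
  have hxd : x + d ∈ I := hI.out hx hr ⟨by linarith, by linarith⟩
  have hyd : y + d ∈ I := hI.out hx hxd ⟨by linarith, by linarith⟩
  calc barEntry g r c = barEntry g (x + d) x :=
        hg.barEntry_eq_of_sub_eq hI hr hc hxd hx hcr (by ring)
    _ = barEntry g (x + d + (y - x)) y := by
      refine (hg.barEntry_eq_of_covRel hxy hx ((add_modEq_left.mpr hd).symm) ?_).symm
      rwa [show x + d + (y - x) = y + d by ring]
    _ = 0 := barEntry_eq_zero_of_notMem_right hy

lemma barEntry_triangular (hg : IsBarEnd Q g) (hne : I.Nonempty) (hbdd : BddBelow I)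
    (hI : I.OrdConnected) :
    (∀ r c, r < c → barEntry g r c = 0) ∨ (∀ r c, c < r → barEntry g r c = 0) := by
  obtain ⟨t, hbelow, hnear⟩ := Q.exists_arc_below hne hbdd hI
  have htI : Q.α t ∉ I := fun h => lt_irrefl _ (hbelow _ h)
  have hmem {y : ℝ} (hy : y ∈ I) (hyt : y ≤ Q.α (t + 1)) : y ∈ Icc (Q.α t) (Q.α (t + 1)) :=
    ⟨(hbelow y hy).le, hyt⟩
  have hα : Q.α t ∈ Icc (Q.α t) (Q.α (t + 1)) := ⟨le_rfl, Q.mono.monotone (by omega)⟩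
  have hlen {y : ℝ} (hyt : y ≤ Q.α (t + 1)) : y - Q.α t < 2 * Real.pi := by
    linarith [Q.α_succ_sub_lt t]
  by_cases hup : Q.m = 0 ∨ ¬ Even t
  · refine .inl fun r c hrc => ?_
    by_contra hne
    obtain ⟨hr, hc, hcr⟩ := mem_of_barEntry_ne_zero hne
    obtain ⟨y, hy, hyr, hyt⟩ := hnear r hr
    exact hne (hg.barEntry_eq_zero_of_covRel_into hI
      (AtR.covRel_of_mem_arc_of_up hup hα (hmem hy hyt) (hbelow y hy).le) htI hy
      (hbelow y hy).le (hlen hyt) hr hc hcr hyr hrc)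
  · push Not at hup
    refine .inr fun r c hcr' => ?_
    by_contra hne
    obtain ⟨hr, hc, hcr⟩ := mem_of_barEntry_ne_zero hne
    obtain ⟨y, hy, hyc, hyt⟩ := hnear c hc
    exact hne (hg.barEntry_eq_zero_of_covRel_out hI
      (AtR.covRel_of_mem_arc_of_down hup.1 hup.2 hα (hmem hy hyt) (hbelow y hy).le) hy htI
      (hbelow y hy).le (hlen hyt) hr hc hcr hyc hcr')

lemma eq_zero_of_isIdempotentElem (hg : IsBarEnd Q g) (hidem : IsIdempotentElem g)
    (htri : (∀ r c, r < c → barEntry g r c = 0) ∨ (∀ r c, c < r → barEntry g r c = 0))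
    (hdiag : ∀ c ∈ I, barEntry g c c ≠ 1) : g = 0 := by
  funext θ
  refine LinearMap.ext fun w => ?_
  by_contra hu
  set u := g θ w
  have hfix : g θ u = u := LinearMap.congr_fun (congr_fun hidem θ) w
  obtain ⟨b, hb, hzero⟩ : ∃ b ∈ u.support, ∀ β ∈ u.support, β ≠ b → barEntry g b.1 β.1 = 0 := by
    have hsupp := Finsupp.support_nonempty_iff.mpr hu
    rcases htri with h | h
    · obtain ⟨b, hb, hmin⟩ := u.support.exists_min_image (fun β => β.1) hsupp
      exact ⟨b, hb, fun β hβ hne =>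
        h _ _ ((hmin β hβ).lt_of_ne fun heq => hne (Subtype.ext heq.symm))⟩
    · obtain ⟨b, hb, hmax⟩ := u.support.exists_max_image (fun β => β.1) hsupp
      exact ⟨b, hb, fun β hβ hne =>
        h _ _ ((hmax β hβ).lt_of_ne fun heq => hne (Subtype.ext heq))⟩
  have hub : u b * 1 = u b * barEntry g b.1 b.1 := by
    conv_lhs => rw [mul_one, ← hfix]
    rw [hg.apply_apply, Finsupp.sum_eq_single b
      (fun β hβ hne => by rw [hzero β (Finsupp.mem_support_iff.mpr hβ) hne, mul_zero])
      (fun _ => zero_mul _)]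
  exact hdiag b.1 b.2.1 (mul_left_cancel₀ (Finsupp.mem_support_iff.mp hb) hub).symm

theorem eq_zero_or_eq_one (hg : IsBarEnd Q g) (hidem : IsIdempotentElem g) (hne : I.Nonempty)
    (hbdd : BddBelow I) (hI : I.OrdConnected) : g = 0 ∨ g = 1 := by
  obtain ⟨c₀, hc₀⟩ := hne
  have hdiag (c : ℝ) (hc : c ∈ I) : barEntry g c c = barEntry g c₀ c₀ :=
    hg.barEntry_eq_of_sub_eq hI hc hc hc₀ hc₀ modEq_rfl (by ring)
  by_cases h1 : barEntry g c₀ c₀ = 1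
  · right
    have hidem' : IsIdempotentElem (1 - g) :=
      IsIdempotentElem.one_sub (R := ∀ θ, Module.End k (barIdx I θ →₀ k)) hidem
    have h0 := hg.one_sub.eq_zero_of_isIdempotentElem hidem'
      (hg.one_sub.barEntry_triangular ⟨c₀, hc₀⟩ hbdd hI)
      (fun c hc => by simp [barEntry_one_sub_self hc, hdiag c hc, h1])
    exact (sub_eq_zero.mp h0).symm
  · exact .inl (hg.eq_zero_of_isIdempotentElem hidem (hg.barEntry_triangular ⟨c₀, hc₀⟩ hbdd hI)
      fun c hc => hdiag c hc ▸ h1)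

end IsBarEnd

end BarCoordinates

namespace SRep

variable {k : Type} [Field k] {Q : AtR}

theorem indecomposable_of_isIdempotentElem {V : SRep k Q} (hV : V.Nonzero)
    (h : ∀ f ∈ V.endSubring, IsIdempotentElem f → f = 0 ∨ f = 1) : V.Indecomposable := by
  refine ⟨hV, fun A B hA hB ⟨e, he_map, he_per⟩ => ?_⟩
  let Φ := RingEquiv.piCongrRight fun θ => (e θ).conjRingEquiv
  let π : ∀ θ, Module.End k ((A.prod B).obj θ) := fun θ =>
    LinearMap.inl k (A.obj θ) (B.obj θ) ∘ₗ LinearMap.fst k (A.obj θ) (B.obj θ)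
  have hπ : IsIdempotentElem π := by
    funext θ
    exact LinearMap.ext fun v => rfl
  have hΦ (θ : ℝ) (v : V.obj θ) : Φ.symm π θ v = (e θ).symm (π θ (e θ v)) := rfl
  have hmem : Φ.symm π ∈ V.endSubring := by
    constructor
    · intro θ φ h v
      rw [hΦ, hΦ, LinearEquiv.symm_apply_eq, he_map, he_map, LinearEquiv.apply_symm_apply]
      exact Prod.ext rfl (map_zero (B.map h)).symm
    · intro θ v
      rw [hΦ, hΦ, LinearEquiv.symm_apply_eq, he_per, he_per, LinearEquiv.apply_symm_apply]
      exact Prod.ext rfl (map_zero (B.per θ)).symm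
  rcases h _ hmem (hπ.map Φ.symm) with h0 | h1
  · obtain ⟨θ, a, ha⟩ := hA
    have : π = 0 := by simpa using congrArg Φ h0
    exact ha (congrArg Prod.fst (LinearMap.congr_fun (congr_fun this θ) (a, 0)))
  · obtain ⟨θ, b, hb⟩ := hB
    have : π = 1 := by simpa using congrArg Φ h1
    exact hb (congrArg Prod.snd (LinearMap.congr_fun (congr_fun this θ) (0, b))).symm

theorem IsBar.indecomposable {V : SRep k Q} (hbar : V.IsBar) : V.Indecomposable := by
  obtain ⟨I, hne, hbd, hI, e, he_map, he_per⟩ := hbar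
  have hV : V.Nonzero := by
    obtain ⟨β, hβ⟩ := hne
    exact ⟨β, (e β).symm (Finsupp.single (barPt hβ modEq_rfl) 1),
      (e β).symm.map_ne_zero_iff.mpr (Finsupp.single_ne_zero.mpr one_ne_zero)⟩
  refine indecomposable_of_isIdempotentElem hV fun f hf hidem => ?_
  let Φ := RingEquiv.piCongrRight fun θ => (e θ).conjRingEquiv
  have hΦ (θ : ℝ) (w : barIdx I θ →₀ k) : Φ f θ w = e θ (f θ ((e θ).symm w)) := rfl
  have hg : IsBarEnd Q (Φ f) := by
    constructor
    · intro x y h w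
      obtain ⟨v, rfl⟩ := (e x).surjective w
      rw [hΦ, hΦ, ← he_map h, LinearEquiv.symm_apply_apply, LinearEquiv.symm_apply_apply, hf.1 h,
        he_map]
    · intro θ w
      obtain ⟨v, rfl⟩ := (e (θ + 2 * Real.pi)).surjective w
      rw [hΦ, hΦ, ← he_per, LinearEquiv.symm_apply_apply, LinearEquiv.symm_apply_apply, hf.2 θ,
        he_per]
  rcases hg.eq_zero_or_eq_one (hidem.map Φ) hne hbd.bddBelow hI with h | h
  · exact .inl ((map_eq_zero_iff Φ Φ.injective).mp h)
  · exact .inr (Φ.injective (h.trans (map_one Φ).symm))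

variable {V W : SRep k Q} {f : ∀ θ, V.obj θ →ₗ[k] W.obj θ}
  {hV : ∀ ⦃θ φ : ℝ⦄ (h : Q.covRel θ φ), Function.Bijective (V.map h)}
  {hW : ∀ ⦃θ φ : ℝ⦄ (h : Q.covRel θ φ), Function.Bijective (W.map h)}

lemma apply_castO {a b : ℝ} (h : a = b) (v : V.obj a) :
    f b (V.castO h v) = W.castO h (f a v) := by
  subst h
  rfl

lemma IsHomFam.apply_step (hf : IsHomFam V W f) (j : ℤ) (v : V.obj (Q.α j)) :
    f _ (V.step hV j v) = W.step hW j (f _ v) := by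
  unfold step
  split_ifs with h
  · exact hf.1 _ v
  · rw [LinearEquiv.eq_symm_apply, LinearEquiv.ofBijective_apply, ← hf.1]
    congr 1
    exact LinearEquiv.apply_symm_apply (LinearEquiv.ofBijective _ (hV _)) v

lemma IsHomFam.apply_zig (hf : IsHomFam V W f) (n : ℕ) (v : V.obj (Q.α 0)) :
    f _ (V.zig hV n v) = W.zig hW n (f _ v) := by
  induction n with
  | zero => exact apply_castO _ v
  | succ n ih =>
    simp only [zig, LinearEquiv.trans_apply]
    rw [apply_castO, hf.apply_step, ih]

lemma IsHomFam.apply_monodromy (hf : IsHomFam V W f) (v : V.obj (Q.α 0)) :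
    f _ (V.monodromy hV v) = W.monodromy hW (f _ v) := by
  simp only [monodromy, LinearEquiv.trans_apply]
  rw [hf.2, apply_castO, hf.apply_zig]

lemma IsHomFam.eq_smul_one_iff {g : ∀ θ, Module.End k (V.obj θ)} (hg : IsHomFam V V g)
    {θ φ : ℝ} {h : Q.covRel θ φ} (hh : Function.Bijective (V.map h)) (a : k) :
    g θ = a • 1 ↔ g φ = a • 1 := by
  constructor
  · intro hθ
    refine LinearMap.ext fun w => ?_
    obtain ⟨v, rfl⟩ := hh.2 w
    rw [hg.1 h, hθ]
    simp
  · intro hφ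
    refine LinearMap.ext fun v => hh.1 ?_
    rw [← hg.1 h, hφ]
    simp

lemma IsJordanCell.nonzero (hJ : V.IsJordanCell) : V.Nonzero := by
  obtain ⟨d, hd, hdim⟩ := hJ.dim
  have : Nontrivial (V.obj (Q.α 0)) := Module.nontrivial_of_finrank_pos (by rw [hdim]; omega)
  obtain ⟨v, hv⟩ := exists_ne (0 : V.obj (Q.α 0))
  exact ⟨_, v, hv⟩

theorem IsJordanCell.indecomposable (hJ : V.IsJordanCell) : V.Indecomposable := by
  refine indecomposable_of_isIdempotentElem hJ.nonzero fun f hf hidem => ?_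
  have hf : IsHomFam V V f := hf
  have hspread (a : k) (h0 : f (Q.α 0) = a • 1) (θ : ℝ) : f θ = a • 1 :=
    (AtR.iff_of_covRel ordConnected_univ (fun θ => f θ = a • 1)
      (fun _ _ _ _ _ h => h.elim (fun h => hf.eq_smul_one_iff (hJ.bij h) a)
        fun h => (hf.eq_smul_one_iff (hJ.bij h) a).symm)
      (mem_univ _) (mem_univ θ)).mp h0
  have hcomm : Commute (f (Q.α 0)) (V.monodromy hJ.bij).toLinearMap :=
    LinearMap.ext (hf.apply_monodromy (hV := hJ.bij) (hW := hJ.bij))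
  have hidem₀ : IsIdempotentElem (f (Q.α 0)) := congr_fun hidem (Q.α 0)
  rcases hidem₀.eq_zero_or_eq_one_of_commute hcomm hJ.indec with h | h
  · exact .inl (funext fun θ => by simpa using hspread 0 (by simpa using h) θ)
  · exact .inr (funext fun θ => by simpa using hspread 1 (by simpa using h) θ)

end SRep

/-- Every bar and every Jordan cell is indecomposable. -/
theorem bar_or_jordan_indecomposable {k : Type} [Field k] {Q : AtR} (V : SRep k Q)
    (h : SRep.IsBar V ∨ SRep.IsJordanCell V) : SRep.Indecomposable V :=
  h.elim SRep.IsBar.indecomposable SRep.IsJordanCell.indecomposable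
end
end
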